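/- arXiv:2011.02039 — 7 statements merged into one kernel-verified Lean document; each statement's English description precedes it below -/
import Mathlib

section
/- For every x ∈ (0,1], the value f(x) belongs to the closed interval [0, 1]. -/
open scoped BigOperators

/-- The value `Δ^E_g` of the Engel series with digit sequence `g`
(`g n` is the paper's `g_{n+1}`). -/
noncomputable def engelSum (g : ℕ → ℕ) : ℝ :=
  ∑' n : ℕ, ∏ k ∈ Finset.range (n + 1),
    ((2 : ℝ) + ∑ i ∈ Finset.range (k + 1), (g i : ℝ))⁻¹

/-- The value of the series `r_{g_1} + ∑_{k≥2} r_{g_k} ∏_{i=1}^{k-1} u_{g_i}`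
defining `f` on the digit sequence `g`. -/
noncomputable def fSeries (u r : ℕ → ℝ) (g : ℕ → ℕ) : ℝ :=
  r (g 0) + ∑' k : ℕ, r (g (k + 1)) * ∏ i ∈ Finset.range (k + 1), u (g i)

/-- `rpred r n = r (n-1)`, with the convention `r (-1) = 1`. -/
noncomputable def rpred (r : ℕ → ℝ) (n : ℕ) : ℝ := if n = 0 then 1 else r (n - 1)

/-!
Since `u a = r (a - 1) - r a`, the map `t ↦ r a + u a * t = (1 - t) r a + t r (a - 1)` sends
`[0, 1]` into itself, being a convex combination of two points of `[0, 1]`. The partial sums of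
`f` are compositions of such maps evaluated at some `r b`, so they lie in `[0, 1]`, and hence so
does their limit.
-/

variable {u r : ℕ → ℝ}

lemma rpred_sub (hr : ∀ n, r n = 1 - ∑ i ∈ Finset.range (n + 1), u i) (n : ℕ) :
    rpred r n - r n = u n := by
  cases n with
  | zero => simp [rpred, hr 0]
  | succ n => simp [rpred, hr n, hr (n + 1), Finset.sum_range_succ _ (n + 1)]

lemma rpred_mem_Icc (hr : ∀ n, r n ∈ Set.Icc (0 : ℝ) 1) (n : ℕ) :
    rpred r n ∈ Set.Icc (0 : ℝ) 1 := by
  unfold rpred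
  split_ifs
  · exact Set.right_mem_Icc.2 zero_le_one
  · exact hr _

noncomputable def fPartial (u r : ℕ → ℝ) (g : ℕ → ℕ) (K : ℕ) : ℝ :=
  r (g 0) + ∑ k ∈ Finset.range K, r (g (k + 1)) * ∏ i ∈ Finset.range (k + 1), u (g i)

lemma fPartial_succ (g : ℕ → ℕ) (K : ℕ) :
    fPartial u r g (K + 1) = r (g 0) + u (g 0) * fPartial u r (fun n => g (n + 1)) K := by
  rw [fPartial, fPartial, Finset.sum_range_succ', mul_add, Finset.mul_sum, add_comm (∑ _ ∈ _, _)]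
  simp only [zero_add, Finset.prod_range_one, Finset.prod_range_succ' _ (_ + 1)]
  congr 2
  · ring
  · exact Finset.sum_congr rfl fun _ _ => by ring

section Icc

variable (hu : ∀ n, u n = rpred r n - r n) (hr : ∀ n, r n ∈ Set.Icc (0 : ℝ) 1)
include hu hr

lemma add_mul_mem_Icc (a : ℕ) {t : ℝ} (ht : t ∈ Set.Icc (0 : ℝ) 1) :
    r a + u a * t ∈ Set.Icc (0 : ℝ) 1 := by
  have hconv := convex_Icc (0 : ℝ) 1 (hr a) (rpred_mem_Icc hr a) (sub_nonneg.2 ht.2) ht.1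
    (sub_add_cancel 1 t)
  convert hconv using 1
  rw [hu, smul_eq_mul, smul_eq_mul]
  ring

lemma fPartial_mem_Icc (K : ℕ) : ∀ g : ℕ → ℕ, fPartial u r g K ∈ Set.Icc (0 : ℝ) 1 := by
  induction K with
  | zero => exact fun g => by simpa [fPartial] using hr (g 0)
  | succ K ih =>
    intro g
    rw [fPartial_succ]
    exact add_mul_mem_Icc hu hr (g 0) (ih _)

lemma fSeries_mem_Icc (g : ℕ → ℕ) : fSeries u r g ∈ Set.Icc (0 : ℝ) 1 := by
  by_cases hS : Summable fun k => r (g (k + 1)) * ∏ i ∈ Finset.range (k + 1), u (g i)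
  · exact isClosed_Icc.mem_of_tendsto (hS.hasSum.tendsto_sum_nat.const_add _)
      (Filter.Eventually.of_forall fun K => fPartial_mem_Icc hu hr K g)
  · rw [fSeries, tsum_eq_zero_of_not_summable hS, add_zero]
    exact hr _

end Icc

theorem stmt1_general
    (u r : ℕ → ℝ)
    (hr : ∀ n, r n = 1 - ∑ i ∈ Finset.range (n + 1), u i)
    (hr01 : ∀ n, 0 < r n ∧ r n < 1)
    (G : ℝ → ℕ → ℕ)
    (f : ℝ → ℝ)
    (hf : ∀ x ∈ Set.Ioc (0:ℝ) 1, f x = fSeries u r (G x)) :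
    ∀ x ∈ Set.Ioc (0:ℝ) 1, f x ∈ Set.Icc (0:ℝ) 1 := by
  intro x hx
  rw [hf x hx]
  exact fSeries_mem_Icc (fun n => (rpred_sub hr n).symm)
    (fun n => Set.Ioo_subset_Icc_self (hr01 n)) (G x)

/-- for every x ∈ (0,1], f(x) ∈ [0,1]. -/
theorem stmt1
    (u r : ℕ → ℝ)
    (hu_sum : HasSum u 1)
    (hu_abs : ∀ n, |u n| < 1)
    (hr : ∀ n, r n = 1 - ∑ i ∈ Finset.range (n + 1), u i)
    (hr01 : ∀ n, 0 < r n ∧ r n < 1)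
    (G : ℝ → ℕ → ℕ)
    (hG : ∀ x ∈ Set.Ioc (0:ℝ) 1, engelSum (G x) = x)
    (hGuniq : ∀ x ∈ Set.Ioc (0:ℝ) 1, ∀ g : ℕ → ℕ, engelSum g = x → g = G x)
    (f : ℝ → ℝ)
    (hf : ∀ x ∈ Set.Ioc (0:ℝ) 1, f x = fSeries u r (G x))
    (hf0 : f 0 = 0) :
    ∀ x ∈ Set.Ioc (0:ℝ) 1, f x ∈ Set.Icc (0:ℝ) 1 :=
  stmt1_general u r hr hr01 G f hf
end

section
/- The function f (extended by f(0) = 0) is continuous at every point of the open interval (0,1), is right-continuous at the point x = 0, and is left-continuous at the point x = 1 (where f(1) = 1). -/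
open scoped BigOperators

/-!
Both series are self-similar under the shift `tail g = (g (n + 1))ₙ`. Writing `E_a` for the Engel
sum with offset `a` in place of `2` (`offsetEngelSum a`), one has
`E_a g = (1 + E_{a + g 0} (tail g)) / (a + g 0)` and `E_a g ∈ (1 / (a + g 0), 1 / (a + g 0 - 1)]`,
while `F = fSeries u r` satisfies `F g = r (g 0) + u (g 0) * F (tail g)`. So the first digit is locally constant to the left of
`E_a g` (and to the right of it unless `tail g = 0`), and the shift reduces every later digit to
the same statement: approaching `x` from the left, or from the right when `x` has infinitely many
nonzero digits, the digits of the approximants converge to those of `x` in the product topology,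
where `F` is continuous because `sup |u n| < 1`. When `x` has finitely many nonzero digits, after
finitely many shifts `x` is the right endpoint of the cylinder of its first digit `k + 1`; points
just to its right have first digit `k` and a second digit tending to `∞`, and
`r k = r (k + 1) + u (k + 1)` matches the two values. At `0` the first digit tends to `∞`, and
`F g → 0` as `g 0 → ∞` because `r n, u n → 0`.
-/

open Finset Filter Topology

theorem inv_mul_one_add_inv_sub_one {b : ℝ} (hb : 1 < b) :
    b⁻¹ * (1 + (b - 1)⁻¹) = (b - 1)⁻¹ := by
  have : b - 1 ≠ 0 := sub_ne_zero.2 hb.ne'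
  field_simp
  ring

theorem one_lt_add_natCast {a : ℝ} (ha : 1 < a) (k : ℕ) : 1 < a + k :=
  lt_add_of_lt_of_nonneg ha k.cast_nonneg

theorem tendsto_mul_sub_one_nhdsLE {b x : ℝ} (hb : 0 < b) :
    Tendsto (fun t => b * t - 1) (𝓝[≤] x) (𝓝[≤] (b * x - 1)) :=
  (by fun_prop : Continuous fun t => b * t - 1).continuousWithinAt.tendsto_nhdsWithin
    fun _ ht => sub_le_sub_right (mul_le_mul_of_nonneg_left ht hb.le) 1

theorem tendsto_mul_sub_one_nhdsGT {b x : ℝ} (hb : 0 < b) :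
    Tendsto (fun t => b * t - 1) (𝓝[>] x) (𝓝[>] (b * x - 1)) :=
  (by fun_prop : Continuous fun t => b * t - 1).continuousWithinAt.tendsto_nhdsWithin
    fun _ ht => sub_lt_sub_right (mul_lt_mul_of_pos_left ht hb) 1

theorem le_nhds_of_head_of_tail {P : ℝ → (ℕ → ℕ) → Prop} {L : ℝ → (ℕ → ℕ) → Filter (ℕ → ℕ)}
    (head : ∀ a g, P a g → ∀ᶠ h in L a g, h 0 = g 0)
    (tail : ∀ a g, P a g → P (a + g 0) (fun n => g (n + 1)) ∧
      Tendsto (fun h n => h (n + 1)) (L a g) (L (a + g 0) fun n => g (n + 1)))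
    {a : ℝ} {g : ℕ → ℕ} (hP : P a g) : L a g ≤ 𝓝 g := by
  suffices ∀ i a g, P a g → ∀ᶠ h in L a g, h i = g i by
    rw [nhds_pi, le_pi]
    intro i
    rw [nhds_discrete, tendsto_pure]
    exact this i a g hP
  intro i
  induction i with
  | zero => exact head
  | succ i ih =>
    intro a g hP
    exact (tail a g hP).2.eventually (ih _ _ (tail a g hP).1)

noncomputable def offsetEngelSum (a : ℝ) (g : ℕ → ℕ) : ℝ :=
  ∑' n : ℕ, ∏ k ∈ range (n + 1), (a + ∑ i ∈ range (k + 1), (g i : ℝ))⁻¹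

theorem engelSum_eq_offsetEngelSum (g : ℕ → ℕ) : engelSum g = offsetEngelSum 2 g := rfl

namespace offsetEngelSum

variable {a : ℝ}

theorem term_le (ha : 0 < a) (g : ℕ → ℕ) (n : ℕ) :
    ∏ k ∈ range (n + 1), (a + ∑ i ∈ range (k + 1), (g i : ℝ))⁻¹ ≤ a⁻¹ ^ (n + 1) := by
  have hden (k : ℕ) : a ≤ a + ∑ i ∈ range (k + 1), (g i : ℝ) :=
    le_add_of_nonneg_right (by positivity)
  calc _ ≤ ∏ _k ∈ range (n + 1), a⁻¹ :=
        prod_le_prod (fun k _ => inv_nonneg.2 (ha.le.trans (hden k)))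
          fun k _ => inv_anti₀ ha (hden k)
    _ = a⁻¹ ^ (n + 1) := by simp

theorem summable (ha : 1 < a) (g : ℕ → ℕ) :
    Summable fun n => ∏ k ∈ range (n + 1), (a + ∑ i ∈ range (k + 1), (g i : ℝ))⁻¹ := by
  have ha0 : 0 < a := one_pos.trans ha
  exact .of_nonneg_of_le (fun n => prod_nonneg fun k _ => by positivity) (term_le ha0 g)
    ((summable_nat_add_iff 1).2
      (summable_geometric_of_lt_one (by positivity) (inv_lt_one_of_one_lt₀ ha)))

theorem eq_inv_mul (ha : 1 < a) (g : ℕ → ℕ) :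
    offsetEngelSum a g = (a + g 0)⁻¹ * (1 + offsetEngelSum (a + g 0) fun n => g (n + 1)) := by
  rw [offsetEngelSum, (summable ha g).tsum_eq_zero_add, offsetEngelSum, mul_add, mul_one,
    ← tsum_mul_left]
  simp only [zero_add, range_one, prod_singleton, sum_singleton]
  congr 1
  refine tsum_congr fun n => ?_
  rw [prod_range_succ' _ (n + 1), mul_comm, zero_add, sum_range_one]
  congr 1
  refine prod_congr rfl fun k _ => ?_
  rw [sum_range_succ' _ (k + 1)]
  ring

theorem tail_eq (ha : 1 < a) (g : ℕ → ℕ) :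
    offsetEngelSum (a + g 0) (fun n => g (n + 1)) = (a + g 0) * offsetEngelSum a g - 1 := by
  have hb : a + g 0 ≠ 0 := by positivity
  rw [eq_inv_mul ha g, ← mul_assoc, mul_inv_cancel₀ hb]
  ring

theorem pos (ha : 1 < a) (g : ℕ → ℕ) : 0 < offsetEngelSum a g := by
  have ha0 : 0 < a := one_pos.trans ha
  exact (summable ha g).tsum_pos (fun n => prod_nonneg fun k _ => by positivity) 0
    (prod_pos fun k _ => by positivity)

theorem le_inv_sub_one (ha : 1 < a) (g : ℕ → ℕ) : offsetEngelSum a g ≤ (a - 1)⁻¹ := by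
  have ha0 : 0 < a := one_pos.trans ha
  have hgeom := (hasSum_geometric_of_lt_one (by positivity) (inv_lt_one_of_one_lt₀ ha)).mul_left a⁻¹
  have hsum : a⁻¹ * (1 - a⁻¹)⁻¹ = (a - 1)⁻¹ := by field_simp
  rw [← hsum]
  exact hasSum_le (fun n => (term_le ha0 g n).trans_eq (pow_succ' _ _)) (summable ha g).hasSum hgeom

theorem mem_Ioc (ha : 1 < a) (g : ℕ → ℕ) :
    offsetEngelSum a g ∈ Set.Ioc (a + g 0)⁻¹ (a + g 0 - 1)⁻¹ := by
  have hb := one_lt_add_natCast ha (g 0)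
  have hpos := pos hb fun n => g (n + 1)
  rw [eq_inv_mul ha]
  constructor
  · exact lt_mul_of_one_lt_right (inv_pos.2 (one_pos.trans hb)) (by linarith)
  · rw [← inv_mul_one_add_inv_sub_one hb]
    gcongr
    exact le_inv_sub_one hb _

theorem zero (ha : 1 < a) : offsetEngelSum a 0 = (a - 1)⁻¹ := by
  have h := eq_inv_mul ha 0
  rw [show (fun n => (0 : ℕ → ℕ) (n + 1)) = 0 from rfl, Pi.zero_apply, Nat.cast_zero,
    add_zero] at h
  have : a - 1 ≠ 0 := sub_ne_zero.2 ha.ne'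
  field_simp at h ⊢
  linarith

theorem lt_inv_sub_one_of_head_ne_zero (ha : 1 < a) {g : ℕ → ℕ} (hg : g 0 ≠ 0) :
    offsetEngelSum a g < (a - 1)⁻¹ := by
  have hg1 : (1 : ℝ) ≤ g 0 := Nat.one_le_cast.2 (Nat.one_le_iff_ne_zero.2 hg)
  calc offsetEngelSum a g ≤ (a + g 0 - 1)⁻¹ := (mem_Ioc ha g).2
    _ ≤ a⁻¹ := inv_anti₀ (by linarith) (by linarith)
    _ < (a - 1)⁻¹ := inv_strictAnti₀ (by linarith) (by linarith)

theorem lt_inv_sub_one (ha : 1 < a) {g : ℕ → ℕ} (hg : ∃ n, g n ≠ 0) :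
    offsetEngelSum a g < (a - 1)⁻¹ := by
  obtain ⟨n, hn⟩ := hg
  induction n generalizing g with
  | zero => exact lt_inv_sub_one_of_head_ne_zero ha hn
  | succ n ih =>
    by_cases h0 : g 0 = 0
    · have htail := ih (g := fun n => g (n + 1)) hn
      rw [eq_inv_mul ha, h0, Nat.cast_zero, add_zero, ← inv_mul_one_add_inv_sub_one ha]
      gcongr
    · exact lt_inv_sub_one_of_head_ne_zero ha h0

theorem lt_inv_add_head_sub_one (ha : 1 < a) {g : ℕ → ℕ} (hg : ∃ n, g (n + 1) ≠ 0) :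
    offsetEngelSum a g < (a + g 0 - 1)⁻¹ := by
  have hb := one_lt_add_natCast ha (g 0)
  rw [eq_inv_mul ha, ← inv_mul_one_add_inv_sub_one hb]
  gcongr
  exact lt_inv_sub_one hb hg

theorem head_eq_of_mem_Ioc (ha : 1 < a) {g : ℕ → ℕ} {k : ℕ}
    (h : offsetEngelSum a g ∈ Set.Ioc (a + k)⁻¹ (a + k - 1)⁻¹) : g 0 = k := by
  have hg := mem_Ioc ha g
  rcases lt_trichotomy (g 0) k with hlt | heq | hgt
  · have : (g 0 : ℝ) + 1 ≤ k := by exact_mod_cast hlt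
    have : (a + k - 1)⁻¹ ≤ (a + g 0)⁻¹ := inv_anti₀ (by positivity) (by linarith)
    linarith [hg.1, h.2]
  · exact heq
  · have : (k : ℝ) + 1 ≤ g 0 := by exact_mod_cast hgt
    have : (a + g 0 - 1)⁻¹ ≤ (a + k)⁻¹ := inv_anti₀ (by positivity) (by linarith)
    linarith [hg.2, h.1]

theorem tendsto_head_atTop (ha : 1 < a) {l : Filter (ℕ → ℕ)}
    (h : Tendsto (offsetEngelSum a) l (𝓝 0)) : Tendsto (fun g => g 0) l atTop := by
  have hinv : Tendsto (fun g => (offsetEngelSum a g)⁻¹) l atTop :=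
    tendsto_inv_nhdsGT_zero.comp (tendsto_nhdsWithin_iff.2 ⟨h, .of_forall (pos ha)⟩)
  refine tendsto_natCast_atTop_iff.1 (tendsto_atTop_mono (fun g => ?_)
    (tendsto_atTop_add_const_right _ (-a) hinv))
  have h1 := (mem_Ioc ha g).1
  rw [inv_lt_comm₀ (by positivity) (pos ha g)] at h1
  linarith

theorem eventually_head_eq (ha : 1 < a) {l : Filter ℝ} {k : ℕ}
    (hl : Set.Ioc (a + k)⁻¹ (a + k - 1)⁻¹ ∈ l) :
    ∀ᶠ g in comap (offsetEngelSum a) l, g 0 = k :=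
  mem_comap.2 ⟨_, hl, fun _ hg => head_eq_of_mem_Ioc ha hg⟩

theorem tendsto_tail_comap (ha : 1 < a) {l l' : Filter ℝ} {k : ℕ}
    (hk : ∀ᶠ g in comap (offsetEngelSum a) l, g 0 = k)
    (hl : Tendsto (fun t => (a + k) * t - 1) l l') :
    Tendsto (fun g n => g (n + 1)) (comap (offsetEngelSum a) l)
      (comap (offsetEngelSum (a + k)) l') := by
  refine tendsto_comap_iff.2 ((hl.comp tendsto_comap).congr' (hk.mono fun g hg => ?_))
  rw [Function.comp_apply, Function.comp_apply, ← hg, tail_eq ha]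

theorem comap_nhdsLE_le_nhds (ha : 1 < a) (g : ℕ → ℕ) :
    comap (offsetEngelSum a) (𝓝[≤] offsetEngelSum a g) ≤ 𝓝 g := by
  have head (a : ℝ) (g : ℕ → ℕ) (ha : 1 < a) :
      ∀ᶠ h in comap (offsetEngelSum a) (𝓝[≤] offsetEngelSum a g), h 0 = g 0 :=
    eventually_head_eq ha (mem_of_superset (Ioc_mem_nhdsLE (mem_Ioc ha g).1)
      (Set.Ioc_subset_Ioc_right (mem_Ioc ha g).2))
  refine le_nhds_of_head_of_tail (P := fun a _ => 1 < a)
    (L := fun a g => comap (offsetEngelSum a) (𝓝[≤] offsetEngelSum a g)) head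
    (fun a g ha => ⟨one_lt_add_natCast ha (g 0), tendsto_tail_comap ha (head a g ha) ?_⟩) ha
  rw [tail_eq ha]
  exact tendsto_mul_sub_one_nhdsLE (by positivity)

theorem eventually_head_eq_nhdsGT (ha : 1 < a) {g : ℕ → ℕ} (hg : ∃ n, g (n + 1) ≠ 0) :
    ∀ᶠ h in comap (offsetEngelSum a) (𝓝[>] offsetEngelSum a g), h 0 = g 0 :=
  eventually_head_eq ha (mem_of_superset (Ioo_mem_nhdsGT (lt_inv_add_head_sub_one ha hg))
    (Set.Ioo_subset_Ioc_self.trans (Set.Ioc_subset_Ioc_left (mem_Ioc ha g).1.le)))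

theorem tendsto_tail_nhdsGT (ha : 1 < a) {g : ℕ → ℕ} (hg : ∃ n, g (n + 1) ≠ 0) :
    Tendsto (fun h n => h (n + 1)) (comap (offsetEngelSum a) (𝓝[>] offsetEngelSum a g))
      (comap (offsetEngelSum (a + g 0)) (𝓝[>] offsetEngelSum (a + g 0) fun n => g (n + 1))) := by
  refine tendsto_tail_comap ha (eventually_head_eq_nhdsGT ha hg) ?_
  rw [tail_eq ha]
  exact tendsto_mul_sub_one_nhdsGT (by positivity)

theorem comap_nhdsGT_le_nhds (ha : 1 < a) {g : ℕ → ℕ} (hg : ∃ᶠ n in atTop, g n ≠ 0) :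
    comap (offsetEngelSum a) (𝓝[>] offsetEngelSum a g) ≤ 𝓝 g := by
  have frequently_tail {g : ℕ → ℕ} (hg : ∃ᶠ n in atTop, g n ≠ 0) :
      ∃ᶠ n in atTop, g (n + 1) ≠ 0 := by
    rw [← map_add_atTop_eq_nat 1] at hg
    exact hg
  exact le_nhds_of_head_of_tail (P := fun a g => 1 < a ∧ ∃ᶠ n in atTop, g n ≠ 0)
    (L := fun a g => comap (offsetEngelSum a) (𝓝[>] offsetEngelSum a g))
    (fun a g h => eventually_head_eq_nhdsGT h.1 (frequently_tail h.2).exists)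
    (fun a g h => ⟨⟨one_lt_add_natCast h.1 (g 0), frequently_tail h.2⟩,
      tendsto_tail_nhdsGT h.1 (frequently_tail h.2).exists⟩) ⟨ha, hg⟩

end offsetEngelSum

theorem engelSum_eq_one_iff {g : ℕ → ℕ} : engelSum g = 1 ↔ g = 0 := by
  have h2 : (1 : ℝ) < 2 := one_lt_two
  constructor
  · intro h
    by_contra hg
    have := offsetEngelSum.lt_inv_sub_one h2 (Function.ne_iff.1 hg)
    norm_num [← engelSum_eq_offsetEngelSum, h] at this
  · rintro rfl
    rw [engelSum_eq_offsetEngelSum, offsetEngelSum.zero h2]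
    norm_num

namespace fSeries

variable {u r : ℕ → ℝ} {c : ℝ}

theorem abs_term_le (hu : ∀ n, |u n| ≤ c) (hr : ∀ n, |r n| ≤ 1) (g : ℕ → ℕ) (k : ℕ) :
    |r (g (k + 1)) * ∏ i ∈ range (k + 1), u (g i)| ≤ c ^ (k + 1) := by
  have hprod : ∏ i ∈ range (k + 1), |u (g i)| ≤ c ^ (k + 1) :=
    (prod_le_prod (fun _ _ => abs_nonneg _) fun i _ => hu (g i)).trans_eq (by simp)
  rw [abs_mul, abs_prod, ← one_mul (c ^ (k + 1))]
  exact mul_le_mul (hr _) hprod (prod_nonneg fun _ _ => abs_nonneg _) zero_le_one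

theorem summable_term (hu : ∀ n, |u n| ≤ c) (hc : c < 1) (hr : ∀ n, |r n| ≤ 1) (g : ℕ → ℕ) :
    Summable fun k => r (g (k + 1)) * ∏ i ∈ range (k + 1), u (g i) :=
  .of_norm_bounded ((summable_nat_add_iff 1).2
    (summable_geometric_of_lt_one ((abs_nonneg _).trans (hu 0)) hc)) (abs_term_le hu hr g)

theorem eq_add_mul (hu : ∀ n, |u n| ≤ c) (hc : c < 1) (hr : ∀ n, |r n| ≤ 1) (g : ℕ → ℕ) :
    fSeries u r g = r (g 0) + u (g 0) * fSeries u r (fun n => g (n + 1)) := by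
  rw [fSeries, (summable_term hu hc hr g).tsum_eq_zero_add, fSeries, mul_add, ← tsum_mul_left]
  congr 2
  · simp [mul_comm]
  · refine tsum_congr fun k => ?_
    rw [prod_range_succ' _ (k + 1)]
    ring

theorem abs_le (hu : ∀ n, |u n| ≤ c) (hc : c < 1) (hr : ∀ n, |r n| ≤ 1) (g : ℕ → ℕ) :
    |fSeries u r g| ≤ (1 - c)⁻¹ := by
  have hc0 : 0 ≤ c := (abs_nonneg _).trans (hu 0)
  have htail : |∑' k, r (g (k + 1)) * ∏ i ∈ range (k + 1), u (g i)| ≤ c * (1 - c)⁻¹ := by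
    rw [← Real.norm_eq_abs]
    exact tsum_of_norm_bounded ((hasSum_geometric_of_lt_one hc0 hc).mul_left c)
      fun k => (abs_term_le hu hr g k).trans_eq (pow_succ' c k)
  calc |fSeries u r g| ≤ 1 + c * (1 - c)⁻¹ := (abs_add_le _ _).trans (add_le_add (hr _) htail)
    _ = (1 - c)⁻¹ := by field_simp [(sub_pos.2 hc).ne']; ring

theorem continuous (hu : ∀ n, |u n| ≤ c) (hc : c < 1) (hr : ∀ n, |r n| ≤ 1) :
    Continuous (fSeries u r) := by
  have hcoord (j : ℕ) (φ : ℕ → ℝ) : Continuous fun g : ℕ → ℕ => φ (g j) :=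
    continuous_of_discreteTopology.comp (continuous_apply j)
  refine (hcoord 0 r).add (continuous_tsum (fun k => ?_) ((summable_nat_add_iff 1).2
    (summable_geometric_of_lt_one ((abs_nonneg _).trans (hu 0)) hc))
      fun k g => abs_term_le hu hr g k)
  exact (hcoord _ r).mul (continuous_finsetProd _ fun i _ => hcoord i u)

theorem zero_eq_one (hu : ∀ n, |u n| ≤ c) (hc : c < 1) (hr : ∀ n, |r n| ≤ 1)
    (hrp : ∀ n, rpred r n = r n + u n) : fSeries u r 0 = 1 := by
  have h := eq_add_mul hu hc hr 0
  rw [show (fun n => (0 : ℕ → ℕ) (n + 1)) = 0 from rfl, Pi.zero_apply] at h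
  have h0 : r 0 + u 0 = 1 := by simpa [rpred] using (hrp 0).symm
  have hu1 : u 0 ≠ 1 := by linarith [le_abs_self (u 0), hu 0]
  have : (1 - u 0) * (fSeries u r 0 - 1) = 0 := by linarith
  rcases mul_eq_zero.1 this with h1 | h1
  · exact absurd (by linarith) hu1
  · linarith

theorem tendsto_zero_of_tendsto_head (hu : ∀ n, |u n| ≤ c) (hc : c < 1) (hr : ∀ n, |r n| ≤ 1)
    (hu0 : Tendsto u atTop (𝓝 0)) (hr0 : Tendsto r atTop (𝓝 0)) {l : Filter (ℕ → ℕ)}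
    (h : Tendsto (fun g => g 0) l atTop) : Tendsto (fSeries u r) l (𝓝 0) := by
  have hbdd : IsBoundedUnder (· ≤ ·) l fun g => ‖fSeries u r (fun n => g (n + 1))‖ :=
    isBoundedUnder_of ⟨_, fun g => abs_le hu hc hr _⟩
  have := (hr0.comp h).add ((hu0.comp h).zero_mul_isBoundedUnder_le hbdd)
  rw [add_zero] at this
  exact this.congr fun g => (eq_add_mul hu hc hr g).symm

theorem tendsto_of_eventually_head_eq (hu : ∀ n, |u n| ≤ c) (hc : c < 1) (hr : ∀ n, |r n| ≤ 1)
    {l : Filter (ℕ → ℕ)} {k : ℕ} {v : ℝ} (hk : ∀ᶠ g in l, g 0 = k)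
    (h : Tendsto (fun g => fSeries u r fun n => g (n + 1)) l (𝓝 v)) :
    Tendsto (fSeries u r) l (𝓝 (r k + u k * v)) :=
  (tendsto_const_nhds.add (tendsto_const_nhds.mul h)).congr'
    (hk.mono fun g hg => by rw [eq_add_mul hu hc hr g, hg])

theorem tendsto_comap_nhdsGT_of_tail_eq_zero (hu : ∀ n, |u n| ≤ c) (hc : c < 1)
    (hr : ∀ n, |r n| ≤ 1) (hu0 : Tendsto u atTop (𝓝 0)) (hr0 : Tendsto r atTop (𝓝 0))
    (hrp : ∀ n, rpred r n = r n + u n) {a : ℝ} (ha : 1 < a) {g : ℕ → ℕ} {k : ℕ}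
    (hk : g 0 = k + 1) (htail : ∀ n, g (n + 1) = 0) :
    Tendsto (fSeries u r) (comap (offsetEngelSum a) (𝓝[>] offsetEngelSum a g))
      (𝓝 (fSeries u r g)) := by
  have hb := one_lt_add_natCast ha k
  have htail' : (fun n => g (n + 1)) = 0 := funext htail
  have hx : offsetEngelSum a g = (a + k)⁻¹ := by
    have hb' := one_lt_add_natCast ha (g 0)
    rw [offsetEngelSum.eq_inv_mul ha, htail', offsetEngelSum.zero hb',
      inv_mul_one_add_inv_sub_one hb', hk]
    push_cast
    ring_nf
  have hFg : fSeries u r g = r k := by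
    rw [eq_add_mul hu hc hr, htail', zero_eq_one hu hc hr hrp, hk, mul_one, ← hrp]
    rfl
  rw [hx, hFg]
  -- just to the right of `(a + k)⁻¹` the first digit is `k` and the Engel sum of the tail is small
  have head : ∀ᶠ h in comap (offsetEngelSum a) (𝓝[>] (a + k)⁻¹), h 0 = k :=
    offsetEngelSum.eventually_head_eq ha (mem_of_superset (Ioo_mem_nhdsGT
      (inv_strictAnti₀ (by linarith) (by linarith))) Set.Ioo_subset_Ioc_self)
  have hshift : Tendsto (fun t => (a + k) * t - 1) (𝓝[>] (a + k)⁻¹) (𝓝 0) := by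
    refine tendsto_nhdsWithin_of_tendsto_nhds
      ((by fun_prop : Continuous fun t => (a + k) * t - 1).tendsto' _ _ ?_)
    rw [mul_inv_cancel₀ (by positivity), sub_self]
  have hFtail := (tendsto_zero_of_tendsto_head hu hc hr hu0 hr0
    (offsetEngelSum.tendsto_head_atTop hb tendsto_comap)).comp
      (offsetEngelSum.tendsto_tail_comap ha head hshift)
  simpa using tendsto_of_eventually_head_eq hu hc hr head hFtail

theorem tendsto_comap_nhdsGT (hu : ∀ n, |u n| ≤ c) (hc : c < 1) (hr : ∀ n, |r n| ≤ 1)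
    (hu0 : Tendsto u atTop (𝓝 0)) (hr0 : Tendsto r atTop (𝓝 0))
    (hrp : ∀ n, rpred r n = r n + u n) {a : ℝ} (ha : 1 < a) {g : ℕ → ℕ} (hg : ∃ n, g n ≠ 0) :
    Tendsto (fSeries u r) (comap (offsetEngelSum a) (𝓝[>] offsetEngelSum a g))
      (𝓝 (fSeries u r g)) := by
  by_cases hfin : ∀ᶠ n in atTop, g n = 0
  · obtain ⟨N, hN⟩ := eventually_atTop.1 hfin
    induction N generalizing a g with
    | zero =>
      obtain ⟨n, hn⟩ := hg
      exact absurd (hN n n.zero_le) hn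
    | succ N ih =>
      by_cases htail : ∃ n, g (n + 1) ≠ 0
      · have hN' (n : ℕ) (hn : N ≤ n) : g (n + 1) = 0 := hN (n + 1) (by omega)
        rw [eq_add_mul hu hc hr g]
        exact tendsto_of_eventually_head_eq hu hc hr
          (offsetEngelSum.eventually_head_eq_nhdsGT ha htail)
          ((ih (one_lt_add_natCast ha (g 0)) htail (eventually_atTop.2 ⟨N, hN'⟩) hN').comp
            (offsetEngelSum.tendsto_tail_nhdsGT ha htail))
      · simp only [not_exists, not_not] at htail
        obtain ⟨n, hn⟩ := hg
        have hg0 : g 0 ≠ 0 := by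
          cases n with
          | zero => exact hn
          | succ n => exact absurd (htail n) hn
        obtain ⟨k, hk⟩ := Nat.exists_eq_succ_of_ne_zero hg0
        exact tendsto_comap_nhdsGT_of_tail_eq_zero hu hc hr hu0 hr0 hrp ha hk htail
  · exact ((continuous hu hc hr).tendsto g).mono_left
      (offsetEngelSum.comap_nhdsGT_le_nhds ha (not_eventually.1 hfin))

end fSeries

theorem continuousWithinAt_of_tendsto_comap {α β γ : Type*} [TopologicalSpace β]
    [TopologicalSpace γ] {E : α → β} {G : β → α} {F : α → γ} {f : β → γ} {D s : Set β} {x : β}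
    (hG : ∀ y ∈ D, E (G y) = y) (hf : ∀ y ∈ D, f y = F (G y)) (hD : D ∈ 𝓝[s] x)
    (hF : Tendsto F (comap E (𝓝[s] x)) (𝓝 (f x))) : ContinuousWithinAt f s x := by
  have hGt : Tendsto G (𝓝[s] x) (comap E (𝓝[s] x)) :=
    tendsto_comap_iff.2 (tendsto_id.congr' (mem_of_superset hD fun y hy => (hG y hy).symm))
  exact (hF.comp hGt).congr' (mem_of_superset hD fun y hy => (hf y hy).symm)

section Digits

variable {G : ℝ → ℕ → ℕ} {F : (ℕ → ℕ) → ℝ} {f : ℝ → ℝ}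

theorem continuousWithinAt_Iic_of_digits (hG : ∀ y ∈ Set.Ioc (0 : ℝ) 1, engelSum (G y) = y)
    (hf : ∀ y ∈ Set.Ioc (0 : ℝ) 1, f y = F (G y)) (hF : Continuous F) {x : ℝ}
    (hx : x ∈ Set.Ioc 0 1) : ContinuousWithinAt f (Set.Iic x) x := by
  have hlim := (hF.tendsto (G x)).mono_left
    (offsetEngelSum.comap_nhdsLE_le_nhds one_lt_two (G x))
  rw [← engelSum_eq_offsetEngelSum, hG x hx, ← hf x hx] at hlim
  exact continuousWithinAt_of_tendsto_comap hG hf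
    (mem_of_superset (Ioc_mem_nhdsLE hx.1) (Set.Ioc_subset_Ioc_right hx.2)) hlim

theorem continuousWithinAt_Ioi_of_digits (hG : ∀ y ∈ Set.Ioc (0 : ℝ) 1, engelSum (G y) = y)
    (hf : ∀ y ∈ Set.Ioc (0 : ℝ) 1, f y = F (G y))
    (hF : ∀ g : ℕ → ℕ, (∃ n, g n ≠ 0) →
      Tendsto F (comap (offsetEngelSum 2) (𝓝[>] offsetEngelSum 2 g)) (𝓝 (F g)))
    {x : ℝ} (hx : x ∈ Set.Ioo 0 1) : ContinuousWithinAt f (Set.Ioi x) x := by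
  have hx1 : x ∈ Set.Ioc 0 1 := Set.Ioo_subset_Ioc_self hx
  have hGx : ∃ n, G x n ≠ 0 :=
    Function.ne_iff.1 fun h => hx.2.ne ((hG x hx1).symm.trans (engelSum_eq_one_iff.2 h))
  have hlim := hF (G x) hGx
  rw [← engelSum_eq_offsetEngelSum, hG x hx1, ← hf x hx1] at hlim
  exact continuousWithinAt_of_tendsto_comap hG hf (mem_of_superset (Ioo_mem_nhdsGT hx.2)
    (Set.Ioo_subset_Ioc_self.trans (Set.Ioc_subset_Ioc_left hx.1.le))) hlim

end Digits

theorem exists_abs_le_lt_one {u : ℕ → ℝ} (hu : ∀ n, |u n| < 1) (h0 : Tendsto u atTop (𝓝 0)) :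
    ∃ c < 1, ∀ n, |u n| ≤ c := by
  have hev : ∀ᶠ n in cocompact ℕ, max |u n| 2⁻¹ ≤ max |u 0| 2⁻¹ := by
    rw [cocompact_eq_atTop]
    filter_upwards [h0.abs.eventually (gt_mem_nhds (by norm_num : |(0 : ℝ)| < 2⁻¹))] with n hn
    exact max_le (hn.le.trans (le_max_right _ _)) (le_max_right _ _)
  obtain ⟨m, hm⟩ := continuous_of_discreteTopology.exists_forall_ge' 0 hev
  exact ⟨_, max_lt (hu m) (by norm_num), fun n => (le_max_left _ _).trans (hm n)⟩

theorem tendsto_zero_of_eq_one_sub_sum {u r : ℕ → ℝ} (hu : HasSum u 1)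
    (hr : ∀ n, r n = 1 - ∑ i ∈ range (n + 1), u i) : Tendsto r atTop (𝓝 0) := by
  simpa [← hr] using
    tendsto_const_nhds.sub (hu.tendsto_sum_nat.comp (tendsto_add_atTop_nat 1)) (a := (1 : ℝ))

theorem rpred_eq_add_of_eq_one_sub_sum {u r : ℕ → ℝ}
    (hr : ∀ n, r n = 1 - ∑ i ∈ range (n + 1), u i) (n : ℕ) : rpred r n = r n + u n := by
  cases n with
  | zero => simp [rpred, hr]
  | succ n =>
    show r n = r (n + 1) + u (n + 1)
    rw [hr, hr, sum_range_succ _ (n + 1)]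
    ring

theorem stmt5_general
    (u r : ℕ → ℝ)
    (hu_sum : HasSum u 1)
    (hu_abs : ∀ n, |u n| < 1)
    (hr : ∀ n, r n = 1 - ∑ i ∈ Finset.range (n + 1), u i)
    (hr01 : ∀ n, 0 < r n ∧ r n < 1)
    (G : ℝ → ℕ → ℕ)
    (hG : ∀ x ∈ Set.Ioc (0:ℝ) 1, engelSum (G x) = x)
    (f : ℝ → ℝ)
    (hf : ∀ x ∈ Set.Ioc (0:ℝ) 1, f x = fSeries u r (G x))
    (hf0 : f 0 = 0) :
    (∀ x ∈ Set.Ioo (0:ℝ) 1, ContinuousAt f x) ∧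
    ContinuousWithinAt f (Set.Ici (0:ℝ)) 0 ∧
    ContinuousWithinAt f (Set.Iic (1:ℝ)) 1 ∧
    f 1 = 1 := by
  have hu0 : Tendsto u atTop (𝓝 0) := hu_sum.summable.tendsto_atTop_zero
  obtain ⟨c, hc, hu⟩ := exists_abs_le_lt_one hu_abs hu0
  have hr1 (n : ℕ) : |r n| ≤ 1 := abs_le.2 ⟨by linarith [(hr01 n).1], (hr01 n).2.le⟩
  have hr0 := tendsto_zero_of_eq_one_sub_sum hu_sum hr
  have hrp := rpred_eq_add_of_eq_one_sub_sum hr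
  have h1 : (1 : ℝ) ∈ Set.Ioc 0 1 := Set.right_mem_Ioc.2 one_pos
  have hF := fSeries.continuous hu hc hr1
  refine ⟨fun x hx => continuousAt_iff_continuous_left_right.2
    ⟨continuousWithinAt_Iic_of_digits hG hf hF (Set.Ioo_subset_Ioc_self hx),
      continuousWithinAt_Ioi_iff_Ici.1 (continuousWithinAt_Ioi_of_digits hG hf
        (fun g hg => fSeries.tendsto_comap_nhdsGT hu hc hr1 hu0 hr0 hrp one_lt_two hg) hx)⟩,
    continuousWithinAt_Ioi_iff_Ici.1 ?_, continuousWithinAt_Iic_of_digits hG hf hF h1, ?_⟩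
  · refine continuousWithinAt_of_tendsto_comap hG hf
      (mem_of_superset (Ioo_mem_nhdsGT one_pos) Set.Ioo_subset_Ioc_self) ?_
    rw [hf0]
    exact fSeries.tendsto_zero_of_tendsto_head hu hc hr1 hu0 hr0
      (offsetEngelSum.tendsto_head_atTop one_lt_two (tendsto_comap.mono_right nhdsWithin_le_nhds))
  · rw [hf 1 h1, engelSum_eq_one_iff.1 (hG 1 h1)]
    exact fSeries.zero_eq_one hu hc hr1 hrp

/-- f is continuous on (0,1), right-continuous at 0,
left-continuous at 1, and f(1) = 1. -/
theorem stmt5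
    (u r : ℕ → ℝ)
    (hu_sum : HasSum u 1)
    (hu_abs : ∀ n, |u n| < 1)
    (hr : ∀ n, r n = 1 - ∑ i ∈ Finset.range (n + 1), u i)
    (hr01 : ∀ n, 0 < r n ∧ r n < 1)
    (G : ℝ → ℕ → ℕ)
    (hG : ∀ x ∈ Set.Ioc (0:ℝ) 1, engelSum (G x) = x)
    (hGuniq : ∀ x ∈ Set.Ioc (0:ℝ) 1, ∀ g : ℕ → ℕ, engelSum g = x → g = G x)
    (f : ℝ → ℝ)
    (hf : ∀ x ∈ Set.Ioc (0:ℝ) 1, f x = fSeries u r (G x))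
    (hf0 : f 0 = 0) :
    (∀ x ∈ Set.Ioo (0:ℝ) 1, ContinuousAt f x) ∧
    ContinuousWithinAt f (Set.Ici (0:ℝ)) 0 ∧
    ContinuousWithinAt f (Set.Iic (1:ℝ)) 1 ∧
    f 1 = 1 :=
  stmt5_general u r hu_sum hu_abs hr hr01 G hG f hf hf0
end

section
/- The function f is the unique solution, in the class of bounded functions defined at every point of (0,1], of the system of functional equations h(x) = r_{g_1(x)} + u_{g_1(x)} · h(ω(x)) for all x ∈ (0,1]; i.e., if h : (0,1] → ℝ is bounded and satisfies h(x) = r_{g_1(x)} + u_{g_1(x)} · h(ω(x)) for every x ∈ (0,1], then h = f on (0,1]. -/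
/-!
The difference `d = h - f` of two bounded solutions satisfies `d x = u_{g₁(x)} · d (ω x)`.
Since `u_n → 0` and `|u_n| < 1`, all `|u_n|` lie below a single `q < 1`, so iterating gives
`|d x| ≤ C qⁿ` for every `n`, whence `d = 0`. That `f` itself is a bounded solution comes from
comparing its series termwise with `∑ qᵏ` and from the uniqueness of the E-representation,
which identifies the digits of `ω x` with the shifted digits of `x`.
-/

open scoped BigOperators

open Finset Filter Topology

theorem engelSum_mem_Ioc (g : ℕ → ℕ) : engelSum g ∈ Set.Ioc (0 : ℝ) 1 := by
  set a : ℕ → ℝ := fun n => ∏ k ∈ range (n + 1), ((2 : ℝ) + ∑ i ∈ range (k + 1), (g i : ℝ))⁻¹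
  have ha_pos : ∀ n, 0 < a n := fun n => by positivity
  have ha_le : ∀ n, a n ≤ 1 / 2 / 2 ^ n := fun n => by
    calc a n ≤ ∏ _k ∈ range (n + 1), (2 : ℝ)⁻¹ :=
          prod_le_prod (fun k _ => by positivity) fun k _ =>
            inv_anti₀ two_pos (le_add_of_nonneg_right (by positivity))
      _ = 1 / 2 / 2 ^ n := by rw [prod_const, card_range, pow_succ, inv_pow]; ring
  have ha : Summable a := (summable_geometric_two' 1).of_nonneg_of_le (fun n => (ha_pos n).le) ha_le
  exact ⟨ha.tsum_pos (fun n => (ha_pos n).le) 0 (ha_pos 0),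
    hasSum_le ha_le ha.hasSum (hasSum_geometric_two' 1)⟩

theorem exists_lt_forall_le_of_tendsto {v : ℕ → ℝ} {a c : ℝ} (hv : Tendsto v atTop (𝓝 a))
    (hac : a < c) (hvc : ∀ n, v n < c) : ∃ q < c, ∀ n, v n ≤ q := by
  obtain ⟨m, ham, hmc⟩ := exists_between hac
  obtain ⟨N, hN⟩ := eventually_atTop.1 (hv.eventually_lt_const ham)
  refine ⟨(range (N + 1)).sup' nonempty_range_add_one fun n => max (v n) m,
    (sup'_lt_iff _).2 fun n _ => max_lt (hvc n) hmc, fun n => ?_⟩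
  rcases le_or_gt n N with hn | hn
  · exact (le_max_left _ _).trans (le_sup' (fun n => max (v n) m) (mem_range_succ_iff.2 hn))
  · exact (hN n hn.le).le.trans <| (le_max_right _ _).trans
      (le_sup' (fun n => max (v n) m) (self_mem_range_succ N))

theorem eq_zero_of_abs_le_mul_abs {α : Type*} {S : Set α} {d : α → ℝ} {q C : ℝ}
    (hq0 : 0 ≤ q) (hq : q < 1) (hC : ∀ x ∈ S, |d x| ≤ C)
    (hd : ∀ x ∈ S, ∃ y ∈ S, |d x| ≤ q * |d y|) : ∀ x ∈ S, d x = 0 := by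
  have hpow : ∀ n : ℕ, ∀ x ∈ S, |d x| ≤ C * q ^ n := by
    intro n
    induction n with
    | zero => simpa using hC
    | succ n ih =>
      intro x hx
      obtain ⟨y, hy, hxy⟩ := hd x hx
      calc |d x| ≤ q * (C * q ^ n) := hxy.trans (mul_le_mul_of_nonneg_left (ih y hy) hq0)
        _ = C * q ^ (n + 1) := by ring
  intro x hx
  have hlim : Tendsto (fun n : ℕ => C * q ^ n) atTop (𝓝 0) := by
    simpa using (tendsto_pow_atTop_nhds_zero_of_lt_one hq0 hq).const_mul C
  exact abs_nonpos_iff.1 (ge_of_tendsto' hlim fun n => hpow n x hx)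

section fSeries

variable {u r : ℕ → ℝ} {q : ℝ}

theorem norm_fSeries_term_le (hu : ∀ n, |u n| ≤ q) (hr : ∀ n, |r n| ≤ 1) (g : ℕ → ℕ) (k : ℕ) :
    ‖r (g k) * ∏ i ∈ range k, u (g i)‖ ≤ q ^ k := by
  calc ‖r (g k) * ∏ i ∈ range k, u (g i)‖ ≤ 1 * ∏ _i ∈ range k, q := by
        rw [norm_mul, norm_prod]
        exact mul_le_mul (hr _) (prod_le_prod (fun i _ => norm_nonneg _) fun i _ => hu _)
          (prod_nonneg fun i _ => norm_nonneg _) zero_le_one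
    _ = q ^ k := by rw [one_mul, prod_const, card_range]

theorem fSeries_eq_tsum (hu : ∀ n, |u n| ≤ q) (hr : ∀ n, |r n| ≤ 1) (hq : q < 1) (g : ℕ → ℕ) :
    fSeries u r g = ∑' k, r (g k) * ∏ i ∈ range k, u (g i) := by
  have hq0 : 0 ≤ q := (abs_nonneg _).trans (hu 0)
  have hs := (summable_geometric_of_lt_one hq0 hq).of_norm_bounded (norm_fSeries_term_le hu hr g)
  rw [hs.tsum_eq_zero_add]
  simp [fSeries]

theorem abs_fSeries_le (hu : ∀ n, |u n| ≤ q) (hr : ∀ n, |r n| ≤ 1) (hq : q < 1) (g : ℕ → ℕ) :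
    |fSeries u r g| ≤ (1 - q)⁻¹ := by
  have hq0 : 0 ≤ q := (abs_nonneg _).trans (hu 0)
  rw [fSeries_eq_tsum hu hr hq, ← Real.norm_eq_abs]
  exact tsum_of_norm_bounded (hasSum_geometric_of_lt_one hq0 hq) (norm_fSeries_term_le hu hr g)

theorem fSeries_eq_add_mul_fSeries_shift (hu : ∀ n, |u n| ≤ q) (hr : ∀ n, |r n| ≤ 1) (hq : q < 1)
    (g : ℕ → ℕ) : fSeries u r g = r (g 0) + u (g 0) * fSeries u r (fun n => g (n + 1)) := by
  rw [fSeries_eq_tsum hu hr hq (fun n => g (n + 1)), ← tsum_mul_left, fSeries]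
  congr 2 with k
  rw [prod_range_succ']
  ring

end fSeries

theorem stmt7_general
    (u r : ℕ → ℝ)
    (hu_sum : HasSum u 1)
    (hu_abs : ∀ n, |u n| < 1)
    (hr01 : ∀ n, 0 < r n ∧ r n < 1)
    (G : ℝ → ℕ → ℕ)
    (hGuniq : ∀ x ∈ Set.Ioc (0:ℝ) 1, ∀ g : ℕ → ℕ, engelSum g = x → g = G x)
    (f : ℝ → ℝ)
    (hf : ∀ x ∈ Set.Ioc (0:ℝ) 1, f x = fSeries u r (G x))
    (h : ℝ → ℝ)
    (hbd : ∃ C : ℝ, ∀ x ∈ Set.Ioc (0:ℝ) 1, |h x| ≤ C)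
    (heq : ∀ x ∈ Set.Ioc (0:ℝ) 1,
      h x = r (G x 0) + u (G x 0) * h (engelSum (fun n => G x (n + 1)))) :
    ∀ x ∈ Set.Ioc (0:ℝ) 1, h x = f x := by
  obtain ⟨q, hq, hu⟩ := exists_lt_forall_le_of_tendsto
    (by simpa using hu_sum.summable.tendsto_atTop_zero.abs) one_pos hu_abs
  have hr : ∀ n, |r n| ≤ 1 := fun n => abs_le.2 ⟨by linarith [(hr01 n).1], (hr01 n).2.le⟩
  have hω : ∀ x, engelSum (fun n => G x (n + 1)) ∈ Set.Ioc (0 : ℝ) 1 :=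
    fun x => engelSum_mem_Ioc _
  have hf_eq : ∀ x ∈ Set.Ioc (0 : ℝ) 1,
      f x = r (G x 0) + u (G x 0) * f (engelSum (fun n => G x (n + 1))) := fun x hx => by
    rw [hf x hx, hf _ (hω x), ← hGuniq _ (hω x) _ rfl]
    exact fSeries_eq_add_mul_fSeries_shift hu hr hq (G x)
  obtain ⟨C, hC⟩ := hbd
  have hd_bdd : ∀ y ∈ Set.Ioc (0 : ℝ) 1, |(h - f) y| ≤ C + (1 - q)⁻¹ := fun y hy =>
    calc |h y - f y| ≤ |h y| + |f y| := abs_sub _ _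
      _ ≤ C + (1 - q)⁻¹ := add_le_add (hC y hy) (hf y hy ▸ abs_fSeries_le hu hr hq _)
  have hd_contract : ∀ y ∈ Set.Ioc (0 : ℝ) 1, ∃ z ∈ Set.Ioc (0 : ℝ) 1,
      |(h - f) y| ≤ q * |(h - f) z| := fun y hy => by
    refine ⟨_, hω y, ?_⟩
    rw [Pi.sub_apply, Pi.sub_apply, heq y hy, hf_eq y hy, add_sub_add_left_eq_sub, ← mul_sub,
      abs_mul]
    exact mul_le_mul_of_nonneg_right (hu _) (abs_nonneg _)
  exact fun x hx => sub_eq_zero.1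
    (eq_zero_of_abs_le_mul_abs ((abs_nonneg _).trans (hu 0)) hq hd_bdd hd_contract x hx)

/-- f is the unique bounded solution on (0,1] of the system
h(x) = r_{g₁(x)} + u_{g₁(x)} · h(ω(x)). -/
theorem stmt7
    (u r : ℕ → ℝ)
    (hu_sum : HasSum u 1)
    (hu_abs : ∀ n, |u n| < 1)
    (hr : ∀ n, r n = 1 - ∑ i ∈ Finset.range (n + 1), u i)
    (hr01 : ∀ n, 0 < r n ∧ r n < 1)
    (G : ℝ → ℕ → ℕ)
    (hG : ∀ x ∈ Set.Ioc (0:ℝ) 1, engelSum (G x) = x)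
    (hGuniq : ∀ x ∈ Set.Ioc (0:ℝ) 1, ∀ g : ℕ → ℕ, engelSum g = x → g = G x)
    (f : ℝ → ℝ)
    (hf : ∀ x ∈ Set.Ioc (0:ℝ) 1, f x = fSeries u r (G x))
    (hf0 : f 0 = 0)
    (h : ℝ → ℝ)
    (hbd : ∃ C : ℝ, ∀ x ∈ Set.Ioc (0:ℝ) 1, |h x| ≤ C)
    (heq : ∀ x ∈ Set.Ioc (0:ℝ) 1,
      h x = r (G x 0) + u (G x 0) * h (engelSum (fun n => G x (n + 1)))) :
    ∀ x ∈ Set.Ioc (0:ℝ) 1, h x = f x :=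
  stmt7_general u r hu_sum hu_abs hr01 G hGuniq f hf h hbd heq
end

section
/- If u_p = 0 for some non-negative integer p, then f is constant on every cylinder Δ^E_{c_1 c_2 … c_m p}; explicitly, for every x in this cylinder, f(x) = r_{c_1} + Σ_{k=2}^m r_{c_k} ∏_{i=1}^{k−1} u_{c_i} + r_p ∏_{i=1}^m u_{c_i}. -/
open scoped BigOperators

open Finset

/-- Once a digit `g m` has `u (g m) = 0`, every later product in `fSeries` vanishes. -/
theorem fSeries_eq_sum_range_of_u_eq_zero (u r : ℕ → ℝ) (g : ℕ → ℕ) {m : ℕ}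
    (hm : u (g m) = 0) :
    fSeries u r g = ∑ k ∈ range (m + 1), r (g k) * ∏ i ∈ range k, u (g i) := by
  have htail : ∀ k ∉ range m, r (g (k + 1)) * ∏ i ∈ range (k + 1), u (g i) = 0 := by
    intro k hk
    rw [mem_range, not_lt] at hk
    rw [prod_eq_zero (mem_range.2 (Nat.lt_succ_of_le hk)) hm, mul_zero]
  rw [fSeries, tsum_eq_sum htail, sum_range_succ' _ m, prod_range_zero, mul_one, add_comm]

theorem stmt8_general
    (u r : ℕ → ℝ)
    (G : ℝ → ℕ → ℕ)
    (f : ℝ → ℝ)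
    (hf : ∀ x ∈ Set.Ioc (0:ℝ) 1, f x = fSeries u r (G x))
    (p : ℕ) (hp : u p = 0) (m : ℕ) (hm : 1 ≤ m) (c : ℕ → ℕ)
    (x : ℝ) (hx : x ∈ Set.Ioc (0:ℝ) 1)
    (hcyl : ∀ i < m, G x i = c i) (hxm : G x m = p) :
    f x = r (c 0) + (∑ k ∈ Finset.Ico 1 m, r (c k) * ∏ i ∈ Finset.range k, u (c i))
      + r p * ∏ i ∈ Finset.range m, u (c i) := by
  have hprod : ∀ k ≤ m, ∏ i ∈ range k, u (G x i) = ∏ i ∈ range k, u (c i) := fun k hk =>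
    prod_congr rfl fun i hi => by rw [hcyl i (lt_of_lt_of_le (mem_range.1 hi) hk)]
  have hhead : ∑ k ∈ range m, r (G x k) * ∏ i ∈ range k, u (G x i)
      = ∑ k ∈ range m, r (c k) * ∏ i ∈ range k, u (c i) :=
    sum_congr rfl fun k hk => by
      rw [hcyl k (mem_range.1 hk), hprod k (mem_range.1 hk).le]
  rw [hf x hx, fSeries_eq_sum_range_of_u_eq_zero u r (G x) (hxm ▸ hp), sum_range_succ, hhead,
    sum_range_eq_add_Ico _ hm, hxm, hprod m le_rfl, prod_range_zero, mul_one]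

/-- if u_p = 0 then f is constant on every cylinder Δ^E_{c₁…c_m p},
with the indicated value. -/
theorem stmt8
    (u r : ℕ → ℝ)
    (hu_sum : HasSum u 1)
    (hu_abs : ∀ n, |u n| < 1)
    (hr : ∀ n, r n = 1 - ∑ i ∈ Finset.range (n + 1), u i)
    (hr01 : ∀ n, 0 < r n ∧ r n < 1)
    (G : ℝ → ℕ → ℕ)
    (hG : ∀ x ∈ Set.Ioc (0:ℝ) 1, engelSum (G x) = x)
    (hGuniq : ∀ x ∈ Set.Ioc (0:ℝ) 1, ∀ g : ℕ → ℕ, engelSum g = x → g = G x)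
    (f : ℝ → ℝ)
    (hf : ∀ x ∈ Set.Ioc (0:ℝ) 1, f x = fSeries u r (G x))
    (hf0 : f 0 = 0)
    (p : ℕ) (hp : u p = 0) (m : ℕ) (hm : 1 ≤ m) (c : ℕ → ℕ)
    (x : ℝ) (hx : x ∈ Set.Ioc (0:ℝ) 1)
    (hcyl : ∀ i < m, G x i = c i) (hxm : G x m = p) :
    f x = r (c 0) + (∑ k ∈ Finset.Ico 1 m, r (c k) * ∏ i ∈ Finset.range k, u (c i))
      + r p * ∏ i ∈ Finset.range m, u (c i) :=
  stmt8_general u r G f hf p hp m hm c x hx hcyl hxm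
end

section
/- If u_n ≠ 0 for every non-negative integer n, then f has no interval of constancy: there is no non-degenerate subinterval (a, b) of [0, 1] on which f is constant. -/
open scoped BigOperators

/-!
Take `x` in the middle of the interval and keep its first `N` Engel digits, `N` so large that
every digit sequence with that prefix represents a point of the interval. Continuing the
prefix by the digits `t, 0, 0, …` gives a point at which `f` equals
`S + P * (r_t + u_t)`, where `S` and `P = u_{g_1} ⋯ u_{g_N} ≠ 0` depend only on the prefix:
the tail `0, 0, …` contributes `r_0 (1 + u_0 + u_0² + ⋯) = 1` since `r_0 = 1 - u_0`.
Going from `t = 0` to `t = 1` changes `r_t + u_t` by `-u_0 ≠ 0`, so `f` is not constant there.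
-/

open Finset

namespace EngelSeries

section Splice

variable {α : Type*} {g s : ℕ → α} {N i : ℕ}

def splice (g s : ℕ → α) (N : ℕ) : ℕ → α := fun i => if i < N then g i else s (i - N)

lemma splice_of_lt (h : i < N) : splice g s N i = g i := if_pos h

lemma splice_add (i : ℕ) : splice g s N (i + N) = s i := by
  simp [splice]

end Splice

section Engel

variable {g g' : ℕ → ℕ} {n N : ℕ}

noncomputable def engelTerm (g : ℕ → ℕ) (n : ℕ) : ℝ :=
  ∏ k ∈ range (n + 1), ((2 : ℝ) + ∑ i ∈ range (k + 1), (g i : ℝ))⁻¹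

lemma engelSum_eq_tsum (g : ℕ → ℕ) : engelSum g = ∑' n, engelTerm g n := rfl

lemma engelTerm_nonneg (g : ℕ → ℕ) (n : ℕ) : 0 ≤ engelTerm g n :=
  prod_nonneg fun _ _ => by positivity

lemma engelTerm_le_half_pow (g : ℕ → ℕ) (n : ℕ) : engelTerm g n ≤ (1 / 2) ^ (n + 1) := by
  calc engelTerm g n ≤ ∏ _k ∈ range (n + 1), (1 / 2 : ℝ) := by
        refine prod_le_prod (fun _ _ => by positivity) fun k _ => ?_
        rw [one_div]
        exact inv_anti₀ two_pos (le_add_of_nonneg_right (by positivity))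
    _ = (1 / 2) ^ (n + 1) := by rw [prod_const, card_range]

lemma engelTerm_congr (h : ∀ i ≤ n, g i = g' i) : engelTerm g n = engelTerm g' n :=
  prod_congr rfl fun k hk => by
    rw [sum_congr rfl fun i hi => by
      rw [h i (by simp only [mem_range] at hk hi; omega)]]

lemma summable_engelTerm (g : ℕ → ℕ) : Summable (engelTerm g) :=
  Summable.of_nonneg_of_le (engelTerm_nonneg g) (engelTerm_le_half_pow g)
    ((summable_geometric_two).comp_injective (add_left_injective 1))

lemma tsum_engelTerm_add_le (g : ℕ → ℕ) (N : ℕ) :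
    ∑' n, engelTerm g (n + N) ≤ (1 / 2) ^ N := by
  refine hasSum_le (fun n => ?_) ((summable_nat_add_iff N).2 (summable_engelTerm g)).hasSum
    (hasSum_geometric_two' ((1 / 2) ^ N))
  calc engelTerm g (n + N) ≤ (1 / 2) ^ (n + N + 1) := engelTerm_le_half_pow g (n + N)
    _ = (1 / 2) ^ N / 2 / 2 ^ n := by rw [pow_succ, pow_add, div_pow, one_pow]; ring

lemma abs_engelSum_sub_le (h : ∀ i < N, g i = g' i) :
    |engelSum g - engelSum g'| ≤ (1 / 2) ^ N := by
  have hprefix : ∑ n ∈ range N, engelTerm g n = ∑ n ∈ range N, engelTerm g' n :=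
    sum_congr rfl fun n hn => engelTerm_congr fun i hi => h i (by simp at hn; omega)
  rw [engelSum_eq_tsum, engelSum_eq_tsum, ← (summable_engelTerm g).sum_add_tsum_nat_add N,
    ← (summable_engelTerm g').sum_add_tsum_nat_add N, hprefix, add_sub_add_left_eq_sub]
  exact abs_sub_le_of_nonneg_of_le (tsum_nonneg fun _ => engelTerm_nonneg _ _)
    (tsum_engelTerm_add_le g N) (tsum_nonneg fun _ => engelTerm_nonneg _ _)
    (tsum_engelTerm_add_le g' N)

end Engel

section FSeries

variable {u r : ℕ → ℝ} {g g' : ℕ → ℕ} {k : ℕ} {a : ℝ}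

/-- Term `k` of `fSeries`, its leading `r (g 0)` being term `0`. -/
noncomputable def fTerm (u r : ℕ → ℝ) (g : ℕ → ℕ) (k : ℕ) : ℝ :=
  r (g k) * ∏ i ∈ range k, u (g i)

lemma fSeries_eq_of_hasSum (h : HasSum (fTerm u r g) a) : fSeries u r g = a := by
  rw [← h.tsum_eq, h.summable.tsum_eq_zero_add]
  simp [fSeries, fTerm]

lemma fTerm_congr (h : ∀ i ≤ k, g i = g' i) : fTerm u r g k = fTerm u r g' k := by
  unfold fTerm
  rw [h k le_rfl, prod_congr rfl fun i hi => by rw [h i (by simp at hi; omega)]]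

lemma fTerm_add (u r : ℕ → ℝ) (g : ℕ → ℕ) (N k : ℕ) :
    fTerm u r g (k + N) = (∏ i ∈ range N, u (g i)) * fTerm u r (fun i => g (i + N)) k := by
  simp only [fTerm, add_comm k N, prod_range_add]
  simp only [add_comm N]
  ring

lemma hasSum_fTerm_of_shift (N : ℕ) (h : HasSum (fTerm u r fun i => g (i + N)) a) :
    HasSum (fTerm u r g)
      (∑ k ∈ range N, fTerm u r g k + (∏ i ∈ range N, u (g i)) * a) := by
  rw [add_comm, ← hasSum_nat_add_iff]
  simpa only [fTerm_add] using h.mul_left (∏ i ∈ range N, u (g i))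

lemma hasSum_fTerm_zero (hu : |u 0| < 1) (hr0 : r 0 = 1 - u 0) : HasSum (fTerm u r 0) 1 := by
  have hu1 : 1 - u 0 ≠ 0 := by linarith [abs_lt.1 hu]
  have h := (hasSum_geometric_of_abs_lt_one hu).mul_left (r 0)
  rw [hr0, mul_inv_cancel₀ hu1, ← hr0] at h
  have hterm : fTerm u r 0 = fun k => r 0 * u 0 ^ k := by
    funext k
    simp [fTerm]
  rwa [hterm]

lemma hasSum_fTerm_single (hu : |u 0| < 1) (hr0 : r 0 = 1 - u 0) (t : ℕ) :
    HasSum (fTerm u r (Pi.single 0 t)) (r t + u t) := by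
  have hshift : (fun i => (Pi.single 0 t : ℕ → ℕ) (i + 1)) = 0 :=
    funext fun i => Pi.single_eq_of_ne (Nat.succ_ne_zero i) t
  have h := hasSum_fTerm_of_shift 1 (hshift ▸ hasSum_fTerm_zero hu hr0)
  simpa [fTerm] using h

lemma fSeries_splice_single (hu : |u 0| < 1) (hr0 : r 0 = 1 - u 0) (g : ℕ → ℕ) (N t : ℕ) :
    fSeries u r (splice g (Pi.single 0 t) N) =
      ∑ k ∈ range N, fTerm u r g k + (∏ i ∈ range N, u (g i)) * (r t + u t) := by
  have hshift : (fun i => splice g (Pi.single 0 t) N (i + N)) = Pi.single 0 t :=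
    funext fun i => splice_add i
  have h := hasSum_fTerm_of_shift (u := u) (r := r) N
    (hshift ▸ hasSum_fTerm_single hu hr0 t)
  rw [fSeries_eq_of_hasSum h]
  have hprefix : ∀ k ∈ range N, fTerm u r (splice g (Pi.single 0 t) N) k = fTerm u r g k :=
    fun k hk => fTerm_congr fun i hi => splice_of_lt (by simp at hk; omega)
  have hprod : ∀ i ∈ range N, u (splice g (Pi.single 0 t) N i) = u (g i) :=
    fun i hi => by rw [splice_of_lt (mem_range.1 hi)]
  rw [sum_congr rfl hprefix, prod_congr rfl hprod]

end FSeries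

end EngelSeries

open EngelSeries

theorem stmt11_general
    (u r : ℕ → ℝ)
    (hu_abs : ∀ n, |u n| < 1)
    (hr : ∀ n, r n = 1 - ∑ i ∈ Finset.range (n + 1), u i)
    (G : ℝ → ℕ → ℕ)
    (hG : ∀ x ∈ Set.Ioc (0:ℝ) 1, engelSum (G x) = x)
    (hGuniq : ∀ x ∈ Set.Ioc (0:ℝ) 1, ∀ g : ℕ → ℕ, engelSum g = x → g = G x)
    (f : ℝ → ℝ)
    (hf : ∀ x ∈ Set.Ioc (0:ℝ) 1, f x = fSeries u r (G x))
    (hu0 : ∀ n, u n ≠ 0) :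
    ¬ ∃ a b : ℝ, 0 ≤ a ∧ a < b ∧ b ≤ 1 ∧
      ∃ cst : ℝ, ∀ x ∈ Set.Ioo a b, f x = cst := by
  rintro ⟨a, b, ha, hab, hb, cst, hcst⟩
  have hx : (a + b) / 2 ∈ Set.Ioc (0:ℝ) 1 := ⟨by linarith, by linarith⟩
  set g := G ((a + b) / 2)
  obtain ⟨N, hN⟩ :=
    exists_pow_lt_of_lt_one (half_pos (sub_pos.2 hab)) (by norm_num : (1 / 2 : ℝ) < 1)
  have hvalue : ∀ t,
      ∑ k ∈ range N, fTerm u r g k + (∏ i ∈ range N, u (g i)) * (r t + u t) = cst := by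
    intro t
    set y := engelSum (splice g (Pi.single 0 t) N)
    have hclose : |y - (a + b) / 2| ≤ (1 / 2) ^ N := by
      rw [← hG _ hx]
      exact abs_engelSum_sub_le fun i hi => splice_of_lt hi
    have hy : y ∈ Set.Ioo a b := by
      constructor <;> linarith [abs_le.1 hclose]
    have hy01 : y ∈ Set.Ioc (0:ℝ) 1 := ⟨by linarith [hy.1], by linarith [hy.2]⟩
    rw [← fSeries_splice_single (hu_abs 0) (by simp [hr 0]), hGuniq y hy01 _ rfl, ← hf y hy01]
    exact hcst y hy
  have hP : ∏ i ∈ range N, u (g i) ≠ 0 := prod_ne_zero_iff.2 fun i _ => hu0 (g i)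
  have hstep : r 1 + u 1 = r 0 + u 0 := mul_left_cancel₀ hP (by linarith [hvalue 0, hvalue 1])
  simp only [hr, sum_range_succ, sum_range_zero] at hstep
  exact hu0 0 (by linarith)

/-- if no u_n vanishes, f has no interval of constancy in [0,1]. -/
theorem stmt11
    (u r : ℕ → ℝ)
    (hu_sum : HasSum u 1)
    (hu_abs : ∀ n, |u n| < 1)
    (hr : ∀ n, r n = 1 - ∑ i ∈ Finset.range (n + 1), u i)
    (hr01 : ∀ n, 0 < r n ∧ r n < 1)
    (G : ℝ → ℕ → ℕ)
    (hG : ∀ x ∈ Set.Ioc (0:ℝ) 1, engelSum (G x) = x)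
    (hGuniq : ∀ x ∈ Set.Ioc (0:ℝ) 1, ∀ g : ℕ → ℕ, engelSum g = x → g = G x)
    (f : ℝ → ℝ)
    (hf : ∀ x ∈ Set.Ioc (0:ℝ) 1, f x = fSeries u r (G x))
    (hf0 : f 0 = 0)
    (hu0 : ∀ n, u n ≠ 0) :
    ¬ ∃ a b : ℝ, 0 ≤ a ∧ a < b ∧ b ≤ 1 ∧
      ∃ cst : ℝ, ∀ x ∈ Set.Ioo a b, f x = cst :=
  stmt11_general u r hu_abs hr G hG hGuniq f hf hu0
end

section
/- If u_n > 0 for every non-negative integer n, then f is strictly increasing on [0, 1]. -/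
open scoped BigOperators

/-!
Both `engelSum g` and `fSeries u r g` are strictly decreasing in the digit sequence `g` for the
lexicographic order. Each series is an increasing affine function of a series of the same kind
evaluated on the shifted sequence, with coefficients depending only on the first digit, and the
first digit alone already separates values: an Engel sum with first digit `n` lies in
`((n + 2)⁻¹, (n + 1)⁻¹]` and `fSeries` with first digit `n` lies in `(r n, rpred r n]`. Induction on
the first index where two sequences differ does the rest. So `x < y` forces `G y < G x`
lexicographically, whence `f x < f y`.
-/

open Finset

theorem strictAnti_lex_of_recursion {α : Type*} (F : α → (ℕ → ℕ) → ℝ) (next : α → ℕ → α)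
    (φ : α → ℕ → ℝ → ℝ) (hφ : ∀ a n, StrictMono (φ a n))
    (hrec : ∀ a g, F a g = φ a (g 0) (F (next a (g 0)) fun i => g (i + 1)))
    (hhead : ∀ a g g', g 0 < g' 0 → F a g' < F a g) (a : α) :
    StrictAnti fun g : Lex (ℕ → ℕ) => F a (ofLex g) := by
  rintro g g' ⟨m, hm, hlt⟩
  induction m generalizing a g g' with
  | zero => exact hhead a g g' hlt
  | succ m ih =>
    show F a (ofLex g') < F a (ofLex g)
    rw [hrec a (ofLex g), hrec a (ofLex g')]
    simp only [Pi.ofLex_apply]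
    rw [← hm 0 m.succ_pos]
    exact hφ _ _ (ih _ (g := toLex fun i => g (i + 1)) (g' := toLex fun i => g' (i + 1))
      (fun j hj => hm (j + 1) (Nat.succ_lt_succ hj)) hlt)

/-- Terms of the tail of an Engel series whose earlier digits sum to `a`. -/
noncomputable def engelTerm (a : ℕ) (g : ℕ → ℕ) (n : ℕ) : ℝ :=
  ∏ k ∈ range (n + 1), ((a : ℝ) + 2 + ∑ i ∈ range (k + 1), (g i : ℝ))⁻¹

noncomputable def engelSumFrom (a : ℕ) (g : ℕ → ℕ) : ℝ := ∑' n, engelTerm a g n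

theorem engelSum_eq_engelSumFrom_zero (g : ℕ → ℕ) : engelSum g = engelSumFrom 0 g := by
  simp [engelSum, engelSumFrom, engelTerm]

theorem engelTerm_pos (a : ℕ) (g : ℕ → ℕ) (n : ℕ) : 0 < engelTerm a g n :=
  prod_pos fun _ _ => by positivity

theorem engelTerm_le (a : ℕ) (g : ℕ → ℕ) (n : ℕ) :
    engelTerm a g n ≤ ((a : ℝ) + 2 + g 0)⁻¹ ^ (n + 1) := by
  calc engelTerm a g n ≤ ∏ _k ∈ range (n + 1), ((a : ℝ) + 2 + g 0)⁻¹ := by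
        refine prod_le_prod (fun _ _ => by positivity) fun k _ => ?_
        gcongr
        exact single_le_sum (f := fun i => (g i : ℝ)) (fun _ _ => by positivity)
          (mem_range.2 k.succ_pos)
    _ = ((a : ℝ) + 2 + g 0)⁻¹ ^ (n + 1) := by rw [prod_const, card_range]

theorem summable_engelTerm (a : ℕ) (g : ℕ → ℕ) : Summable (engelTerm a g) := by
  have hq : ((a : ℝ) + 2 + g 0)⁻¹ < 1 := inv_lt_one_of_one_lt₀ (by norm_cast; omega)
  exact .of_nonneg_of_le (fun n => (engelTerm_pos a g n).le) (engelTerm_le a g)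
    ((summable_nat_add_iff 1).2 (summable_geometric_of_lt_one (by positivity) hq))

theorem engelSumFrom_pos (a : ℕ) (g : ℕ → ℕ) : 0 < engelSumFrom a g :=
  (summable_engelTerm a g).tsum_pos (fun n => (engelTerm_pos a g n).le) 0 (engelTerm_pos a g 0)

theorem engelSumFrom_le (a : ℕ) (g : ℕ → ℕ) : engelSumFrom a g ≤ ((a : ℝ) + 1 + g 0)⁻¹ := by
  set d : ℝ := (a : ℝ) + 2 + g 0 with hd
  have hd1 : 1 < d := by rw [hd]; norm_cast; omega
  have hq1 : d⁻¹ < 1 := inv_lt_one_of_one_lt₀ hd1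
  calc engelSumFrom a g ≤ ∑' n : ℕ, d⁻¹ ^ (n + 1) :=
        (summable_engelTerm a g).tsum_le_tsum (engelTerm_le a g)
          ((summable_nat_add_iff 1).2 (summable_geometric_of_lt_one (by positivity) hq1))
    _ = d⁻¹ * (1 - d⁻¹)⁻¹ := by
        simp_rw [pow_succ']
        rw [tsum_mul_left, tsum_geometric_of_lt_one (by positivity) hq1]
    _ = (d - 1)⁻¹ := by
        have : d - 1 ≠ 0 := by linarith
        field_simp
    _ = ((a : ℝ) + 1 + g 0)⁻¹ := by ring

theorem engelSumFrom_eq (a : ℕ) (g : ℕ → ℕ) :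
    engelSumFrom a g =
      ((a : ℝ) + 2 + g 0)⁻¹ * (1 + engelSumFrom (a + g 0) fun i => g (i + 1)) := by
  have hshift : ∀ n, engelTerm a g (n + 1) =
      ((a : ℝ) + 2 + g 0)⁻¹ * engelTerm (a + g 0) (fun i => g (i + 1)) n := by
    intro n
    rw [engelTerm, prod_range_succ', mul_comm, engelTerm]
    congr 1
    · simp
    · refine prod_congr rfl fun k _ => ?_
      rw [sum_range_succ' _ (k + 1)]
      push_cast
      ring
  rw [engelSumFrom, (summable_engelTerm a g).tsum_eq_zero_add, tsum_congr hshift, tsum_mul_left,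
    engelSumFrom, mul_add, mul_one]
  simp [engelTerm]

theorem engelSumFrom_strictAnti (a : ℕ) :
    StrictAnti fun g : Lex (ℕ → ℕ) => engelSumFrom a (ofLex g) := by
  refine strictAnti_lex_of_recursion engelSumFrom (· + ·)
    (fun a n t => ((a : ℝ) + 2 + n)⁻¹ * (1 + t)) (fun a n s t hst => ?_) engelSumFrom_eq
    (fun a g g' hlt => ?_) a
  · have : (0 : ℝ) < ((a : ℝ) + 2 + n)⁻¹ := by positivity
    simp only
    gcongr
  · have hlt' : (g 0 : ℝ) + 1 ≤ g' 0 := by exact_mod_cast hlt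
    calc engelSumFrom a g' ≤ ((a : ℝ) + 1 + g' 0)⁻¹ := engelSumFrom_le a g'
      _ ≤ ((a : ℝ) + 2 + g 0)⁻¹ := inv_anti₀ (by positivity) (by linarith)
      _ < engelSumFrom a g := by
        rw [engelSumFrom_eq a g, lt_mul_iff_one_lt_right (by positivity)]
        linarith [engelSumFrom_pos (a + g 0) fun i => g (i + 1)]

theorem engelSum_strictAnti : StrictAnti fun g : Lex (ℕ → ℕ) => engelSum (ofLex g) := by
  simpa only [engelSum_eq_engelSumFrom_zero] using engelSumFrom_strictAnti 0

section fSeries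

variable {u r : ℕ → ℝ}

noncomputable def fSeriesTerm (u r : ℕ → ℝ) (g : ℕ → ℕ) (k : ℕ) : ℝ :=
  r (g (k + 1)) * ∏ i ∈ range (k + 1), u (g i)

theorem fSeries_eq_add_tsum (g : ℕ → ℕ) :
    fSeries u r g = r (g 0) + ∑' k, fSeriesTerm u r g k := rfl

theorem add_eq_one_sub_sum_range (hr : ∀ n, r n = 1 - ∑ i ∈ range (n + 1), u i) (n : ℕ) :
    r n + u n = 1 - ∑ i ∈ range n, u i := by
  rw [hr n, sum_range_succ]
  ring

theorem fSeriesTerm_pos (hu : ∀ n, 0 < u n) (hr0 : ∀ n, 0 < r n) (g : ℕ → ℕ) (k : ℕ) :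
    0 < fSeriesTerm u r g k :=
  mul_pos (hr0 _) (prod_pos fun _ _ => hu _)

theorem fSeriesTerm_le (hu : ∀ n, 0 < u n) (hr : ∀ n, r n = 1 - ∑ i ∈ range (n + 1), u i)
    (g : ℕ → ℕ) (k : ℕ) :
    fSeriesTerm u r g k ≤ ∏ i ∈ range (k + 1), u (g i) - ∏ i ∈ range (k + 2), u (g i) := by
  have hrk : r (g (k + 1)) ≤ 1 - u (g (k + 1)) := by
    linarith [add_eq_one_sub_sum_range hr (g (k + 1)),
      sum_nonneg fun i (_ : i ∈ range (g (k + 1))) => (hu i).le]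
  have hP : 0 ≤ ∏ i ∈ range (k + 1), u (g i) := prod_nonneg fun _ _ => (hu _).le
  rw [fSeriesTerm, prod_range_succ _ (k + 1)]
  nlinarith

theorem sum_range_fSeriesTerm_le (hu : ∀ n, 0 < u n)
    (hr : ∀ n, r n = 1 - ∑ i ∈ range (n + 1), u i) (g : ℕ → ℕ) (N : ℕ) :
    ∑ k ∈ range N, fSeriesTerm u r g k ≤ u (g 0) := by
  have hP : 0 < ∏ i ∈ range (N + 1), u (g i) := prod_pos fun _ _ => hu _
  calc ∑ k ∈ range N, fSeriesTerm u r g k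
      ≤ ∑ k ∈ range N, (∏ i ∈ range (k + 1), u (g i) - ∏ i ∈ range (k + 2), u (g i)) :=
        sum_le_sum fun k _ => fSeriesTerm_le hu hr g k
    _ = u (g 0) - ∏ i ∈ range (N + 1), u (g i) := by
        rw [sum_range_sub' (fun k => ∏ i ∈ range (k + 1), u (g i))]
        simp
    _ ≤ u (g 0) := by linarith

theorem summable_fSeriesTerm (hu : ∀ n, 0 < u n) (hr : ∀ n, r n = 1 - ∑ i ∈ range (n + 1), u i)
    (hr0 : ∀ n, 0 < r n) (g : ℕ → ℕ) : Summable (fSeriesTerm u r g) :=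
  summable_of_sum_range_le (fun k => (fSeriesTerm_pos hu hr0 g k).le)
    (sum_range_fSeriesTerm_le hu hr g)

theorem head_lt_fSeries (hu : ∀ n, 0 < u n) (hr : ∀ n, r n = 1 - ∑ i ∈ range (n + 1), u i)
    (hr0 : ∀ n, 0 < r n) (g : ℕ → ℕ) : r (g 0) < fSeries u r g := by
  rw [fSeries_eq_add_tsum, lt_add_iff_pos_right]
  exact (summable_fSeriesTerm hu hr hr0 g).tsum_pos (fun k => (fSeriesTerm_pos hu hr0 g k).le) 0
    (fSeriesTerm_pos hu hr0 g 0)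

theorem fSeries_le (hu : ∀ n, 0 < u n) (hr : ∀ n, r n = 1 - ∑ i ∈ range (n + 1), u i)
    (hr0 : ∀ n, 0 < r n) (g : ℕ → ℕ) : fSeries u r g ≤ 1 - ∑ i ∈ range (g 0), u i := by
  rw [fSeries_eq_add_tsum, ← add_eq_one_sub_sum_range hr, add_le_add_iff_left]
  exact Real.tsum_le_of_sum_range_le (fun k => (fSeriesTerm_pos hu hr0 g k).le)
    (sum_range_fSeriesTerm_le hu hr g)

theorem fSeries_eq (hu : ∀ n, 0 < u n) (hr : ∀ n, r n = 1 - ∑ i ∈ range (n + 1), u i)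
    (hr0 : ∀ n, 0 < r n) (g : ℕ → ℕ) :
    fSeries u r g = r (g 0) + u (g 0) * fSeries u r fun i => g (i + 1) := by
  set T : ℕ → ℝ := fun k => r (g (k + 1)) * ∏ i ∈ range k, u (g (i + 1)) with hT
  have hsum : Summable T := (summable_nat_add_iff 1).1 (summable_fSeriesTerm hu hr hr0 fun i => g (i + 1))
  have hterm : ∀ k, fSeriesTerm u r g k = u (g 0) * T k := fun k => by
    rw [fSeriesTerm, hT, prod_range_succ']
    ring
  rw [fSeries_eq_add_tsum, fSeries_eq_add_tsum, tsum_congr hterm, tsum_mul_left,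
    hsum.tsum_eq_zero_add]
  simp [T, fSeriesTerm]

theorem fSeries_strictAnti (hu : ∀ n, 0 < u n) (hr : ∀ n, r n = 1 - ∑ i ∈ range (n + 1), u i)
    (hr0 : ∀ n, 0 < r n) : StrictAnti fun g : Lex (ℕ → ℕ) => fSeries u r (ofLex g) := by
  refine strictAnti_lex_of_recursion (fun (_ : Unit) => fSeries u r) (fun _ _ => ())
    (fun _ n t => r n + u n * t) (fun _ n s t hst => ?_) (fun _ => fSeries_eq hu hr hr0)
    (fun _ g g' hlt => ?_) ()
  · simp only
    gcongr
    exact hu n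
  · calc fSeries u r g' ≤ 1 - ∑ i ∈ range (g' 0), u i := fSeries_le hu hr hr0 g'
      _ ≤ 1 - ∑ i ∈ range (g 0 + 1), u i := by
        gcongr
        · exact fun i _ _ => (hu i).le
        · exact hlt
      _ = r (g 0) := (hr _).symm
      _ < fSeries u r g := head_lt_fSeries hu hr hr0 g

end fSeries

theorem stmt13_general
    (u r : ℕ → ℝ)
    (hr : ∀ n, r n = 1 - ∑ i ∈ Finset.range (n + 1), u i)
    (hr01 : ∀ n, 0 < r n ∧ r n < 1)
    (G : ℝ → ℕ → ℕ)
    (hG : ∀ x ∈ Set.Ioc (0:ℝ) 1, engelSum (G x) = x)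
    (f : ℝ → ℝ)
    (hf : ∀ x ∈ Set.Ioc (0:ℝ) 1, f x = fSeries u r (G x))
    (hf0 : f 0 = 0)
    (hpos : ∀ n, 0 < u n) :
    StrictMonoOn f (Set.Icc (0:ℝ) 1) := by
  have hr0 : ∀ n, 0 < r n := fun n => (hr01 n).1
  intro x hx y hy hxy
  have hy' : y ∈ Set.Ioc (0:ℝ) 1 := ⟨hx.1.trans_lt hxy, hy.2⟩
  rw [hf y hy']
  rcases hx.1.eq_or_lt with rfl | hx0
  · rw [hf0]
    exact (hr0 _).trans (head_lt_fSeries hpos hr hr0 (G y))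
  · have hx' : x ∈ Set.Ioc (0:ℝ) 1 := ⟨hx0, hx.2⟩
    have hEngel : engelSum (G x) < engelSum (G y) := by rwa [hG x hx', hG y hy']
    have hlex : toLex (G y) < toLex (G x) := engelSum_strictAnti.lt_iff_gt.mp hEngel
    rw [hf x hx']
    exact fSeries_strictAnti hpos hr hr0 hlex

/-- if all u_n > 0 then f is strictly increasing on [0,1]. -/
theorem stmt13
    (u r : ℕ → ℝ)
    (hu_sum : HasSum u 1)
    (hu_abs : ∀ n, |u n| < 1)
    (hr : ∀ n, r n = 1 - ∑ i ∈ Finset.range (n + 1), u i)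
    (hr01 : ∀ n, 0 < r n ∧ r n < 1)
    (G : ℝ → ℕ → ℕ)
    (hG : ∀ x ∈ Set.Ioc (0:ℝ) 1, engelSum (G x) = x)
    (hGuniq : ∀ x ∈ Set.Ioc (0:ℝ) 1, ∀ g : ℕ → ℕ, engelSum g = x → g = G x)
    (f : ℝ → ℝ)
    (hf : ∀ x ∈ Set.Ioc (0:ℝ) 1, f x = fSeries u r (G x))
    (hf0 : f 0 = 0)
    (hpos : ∀ n, 0 < u n) :
    StrictMonoOn f (Set.Icc (0:ℝ) 1) :=
  stmt13_general u r hr hr01 G hG f hf hf0 hpos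
end

section
/- If u_n ≥ 0 for every non-negative integer n, then the non-decreasing continuous function f (with f(0) = 0, f(1) = 1) is pure: the Lebesgue–Stieltjes measure induced by f on [0,1] is either absolutely continuous with respect to Lebesgue measure or mutually singular with Lebesgue measure (equivalently, f is either absolutely continuous on [0,1] or f′(x) = 0 for Lebesgue-almost every x). -/
open scoped BigOperators

/-!
Let `f` have a derivative `d ≠ 0` at a point `t` whose Engel digits `g` are not eventually zero.
The numbers whose digits begin with `g 0, …, g n` form an interval around `t` of length
`ℓ n → 0` across which `f` increases by `∏_{i ≤ n} u (g i)`, so these increment-to-length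
ratios tend to `d` and their successive quotients tend to `1`; moreover the Engel denominators
`2 + g 0 + ⋯ + g n` tend to infinity.

Conversely, fix `0 < ε < u 0` and a cylinder whose denominator `q` satisfies `u 0 * q > 1 + ε`.
Among its points whose next quotient is within `ε` of `1`, the next digit is never `0` (that
quotient would be `u 0 * q`), and the sub-cylinder with next digit `j` has length at most
`u j / (1 - ε)` times that of the cylinder. Summing over `j ≥ 1`, each further level multiplies
the measure by at most `(1 - u 0) / (1 - ε) < 1`. So the points where `f' ≠ 0` lie in the union
of a countable set (digits eventually zero) and a null set.
-/

open Finset Filter MeasureTheory Set Topology Asymptotics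

def engelDenom (g : ℕ → ℕ) (n : ℕ) : ℕ := 2 + ∑ i ∈ range (n + 1), g i

noncomputable def engelProd (g : ℕ → ℕ) (n : ℕ) : ℝ :=
  ∏ k ∈ range n, ((engelDenom g k : ℝ))⁻¹

noncomputable def engelPartialSum (g : ℕ → ℕ) (n : ℕ) : ℝ :=
  ∑ k ∈ range n, engelProd g (k + 1)

/-- The numbers whose Engel digits begin with `g 0, …, g n` fill the interval
`(engelPartialSum g (n + 1), engelPartialSum g (n + 1) + cylinderLength g n]`. -/
noncomputable def cylinderLength (g : ℕ → ℕ) (n : ℕ) : ℝ :=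
  engelProd g (n + 1) / (engelDenom g n - 1)

section Engel

variable {g p : ℕ → ℕ} {n : ℕ}

lemma two_le_engelDenom (g : ℕ → ℕ) (n : ℕ) : 2 ≤ engelDenom g n := Nat.le_add_right _ _

lemma one_lt_engelDenom (g : ℕ → ℕ) (n : ℕ) : (1 : ℝ) < engelDenom g n := by
  exact_mod_cast (two_le_engelDenom g n : 1 < engelDenom g n)

lemma engelDenom_succ (g : ℕ → ℕ) (n : ℕ) : engelDenom g (n + 1) = engelDenom g n + g (n + 1) := by
  rw [engelDenom, engelDenom, sum_range_succ _ (n + 1), Nat.add_assoc]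

lemma engelDenom_mono (g : ℕ → ℕ) : Monotone (engelDenom g) :=
  monotone_nat_of_le_succ fun n => by rw [engelDenom_succ]; omega

lemma engelDenom_congr (h : ∀ i ≤ n, g i = p i) : engelDenom g n = engelDenom p n := by
  rw [engelDenom, engelDenom, sum_congr rfl fun i hi => h i (Nat.lt_succ_iff.1 (mem_range.1 hi))]

lemma engelProd_pos (g : ℕ → ℕ) (n : ℕ) : 0 < engelProd g n :=
  prod_pos fun k _ => inv_pos.2 (by linarith [one_lt_engelDenom g k])

lemma engelProd_succ (g : ℕ → ℕ) (n : ℕ) :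
    engelProd g (n + 1) = engelProd g n / engelDenom g n := by
  rw [engelProd, prod_range_succ, div_eq_mul_inv, engelProd]

lemma engelProd_congr (h : ∀ i < n, g i = p i) : engelProd g n = engelProd p n :=
  prod_congr rfl fun k hk => by
    rw [engelDenom_congr fun i hi => h i (lt_of_le_of_lt hi (mem_range.1 hk))]

lemma engelProd_le_inv_two_pow (g : ℕ → ℕ) (n : ℕ) : engelProd g n ≤ 2⁻¹ ^ n := by
  calc engelProd g n ≤ ∏ _k ∈ range n, (2 : ℝ)⁻¹ :=
        prod_le_prod (fun k _ => (inv_pos.2 (by linarith [one_lt_engelDenom g k])).le)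
          fun k _ => inv_anti₀ two_pos (by exact_mod_cast two_le_engelDenom g k)
    _ = 2⁻¹ ^ n := by rw [prod_const, card_range]

lemma engelProd_add (g : ℕ → ℕ) (n m : ℕ) : engelProd g (n + 1 + m) =
    engelProd g (n + 1) * ∏ i ∈ range m, ((engelDenom g (n + 1 + i) : ℝ))⁻¹ := by
  rw [engelProd, prod_range_add, engelProd]

lemma engelPartialSum_succ (g : ℕ → ℕ) (n : ℕ) :
    engelPartialSum g (n + 1) = engelPartialSum g n + engelProd g (n + 1) :=
  sum_range_succ _ _

lemma engelPartialSum_congr (h : ∀ i < n, g i = p i) :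
    engelPartialSum g n = engelPartialSum p n :=
  sum_congr rfl fun k hk => engelProd_congr fun i hi => h i (by have := mem_range.1 hk; omega)

lemma cylinderLength_pos (g : ℕ → ℕ) (n : ℕ) : 0 < cylinderLength g n :=
  div_pos (engelProd_pos g _) (by linarith [one_lt_engelDenom g n])

lemma cylinderLength_congr (h : ∀ i ≤ n, g i = p i) : cylinderLength g n = cylinderLength p n := by
  rw [cylinderLength, cylinderLength, engelDenom_congr h,
    engelProd_congr fun i hi => h i (Nat.lt_succ_iff.1 hi)]

lemma cylinderLength_le_inv_two_pow (g : ℕ → ℕ) (n : ℕ) : cylinderLength g n ≤ 2⁻¹ ^ (n + 1) := by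
  have h2 : (2 : ℝ) ≤ engelDenom g n := by exact_mod_cast two_le_engelDenom g n
  exact (div_le_self (engelProd_pos g _).le (by linarith)).trans (engelProd_le_inv_two_pow g _)

lemma tendsto_cylinderLength (g : ℕ → ℕ) : Tendsto (cylinderLength g) atTop (𝓝 0) :=
  squeeze_zero (fun n => (cylinderLength_pos g n).le) (cylinderLength_le_inv_two_pow g)
    ((tendsto_pow_atTop_nhds_zero_of_lt_one (by norm_num) (by norm_num)).comp
      (tendsto_add_atTop_nat 1))

lemma summable_engelProd (g : ℕ → ℕ) : Summable fun n => engelProd g (n + 1) :=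
  Summable.of_nonneg_of_le (fun n => (engelProd_pos g _).le)
    (fun n => engelProd_le_inv_two_pow g (n + 1))
    ((summable_nat_add_iff 1).2 (summable_geometric_of_lt_one (by norm_num) (by norm_num)))

lemma engelSum_eq_tsum (g : ℕ → ℕ) : engelSum g = ∑' n, engelProd g (n + 1) := by
  simp only [engelSum, engelProd, engelDenom]
  push_cast
  rfl

lemma engelSum_eq_add_tsum (g : ℕ → ℕ) (n : ℕ) :
    engelSum g = engelPartialSum g (n + 1) + ∑' m, engelProd g (n + 1 + (m + 1)) := by
  rw [engelSum_eq_tsum, ← (summable_engelProd g).sum_add_tsum_nat_add (n + 1)]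
  simp only [engelPartialSum, add_comm, add_left_comm]

lemma summable_engelProd_tail (g : ℕ → ℕ) (n : ℕ) :
    Summable fun m => engelProd g (n + 1 + (m + 1)) :=
  ((summable_nat_add_iff (n + 1)).2 (summable_engelProd g)).congr fun m => by ring_nf

lemma tsum_engelProd_mul_inv_pow (g : ℕ → ℕ) (n : ℕ) :
    ∑' m, engelProd g (n + 1) * ((engelDenom g n : ℝ))⁻¹ ^ (m + 1) = cylinderLength g n := by
  have hq := one_lt_engelDenom g n
  have hc : ((engelDenom g n : ℝ))⁻¹ < 1 := inv_lt_one_of_one_lt₀ hq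
  simp only [pow_succ, ← mul_assoc, tsum_mul_right, tsum_mul_left,
    tsum_geometric_of_lt_one (by positivity) hc, cylinderLength]
  field_simp [(by linarith : (engelDenom g n : ℝ) - 1 ≠ 0)]

lemma engelSum_le (g : ℕ → ℕ) (n : ℕ) :
    engelSum g ≤ engelPartialSum g (n + 1) + cylinderLength g n := by
  have hq := one_lt_engelDenom g n
  have hc : ((engelDenom g n : ℝ))⁻¹ < 1 := inv_lt_one_of_one_lt₀ hq
  rw [engelSum_eq_add_tsum g n, ← tsum_engelProd_mul_inv_pow]
  refine add_le_add_right (Summable.tsum_le_tsum (fun m => ?_) (summable_engelProd_tail g n)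
    ((summable_nat_add_iff 1).2 ((summable_geometric_of_lt_one (by positivity) hc).mul_left _))) _
  rw [engelProd_add]
  refine mul_le_mul_of_nonneg_left ((prod_le_prod (fun i _ => by positivity) fun i _ => ?_).trans_eq
    (by rw [prod_const, card_range])) (engelProd_pos g _).le
  exact inv_anti₀ (by linarith) (by exact_mod_cast engelDenom_mono g (by omega))

lemma engelPartialSum_lt_engelSum (g : ℕ → ℕ) (n : ℕ) : engelPartialSum g (n + 1) < engelSum g := by
  rw [engelSum_eq_add_tsum g n, lt_add_iff_pos_right]
  exact (summable_engelProd_tail g n).tsum_pos (fun m => (engelProd_pos g _).le) 0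
    (engelProd_pos g _)

lemma engelSum_mem_Ioc_s14 (g : ℕ → ℕ) (n : ℕ) :
    engelSum g ∈ Ioc (engelPartialSum g (n + 1)) (engelPartialSum g (n + 1) + cylinderLength g n) :=
  ⟨engelPartialSum_lt_engelSum g n, engelSum_le g n⟩

lemma engelSum_mem_Ioc_zero_one (g : ℕ → ℕ) : engelSum g ∈ Set.Ioc 0 1 := by
  refine ⟨(engelProd_pos g 1).trans_le ?_ |>.trans (engelPartialSum_lt_engelSum g 0), ?_⟩
  · simp [engelPartialSum]
  · calc engelSum g ≤ ∑' n : ℕ, (2⁻¹ : ℝ) ^ (n + 1) := by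
          rw [engelSum_eq_tsum]
          exact Summable.tsum_le_tsum (fun n => engelProd_le_inv_two_pow g (n + 1))
            (summable_engelProd g) ((summable_nat_add_iff 1).2
              (summable_geometric_of_lt_one (by norm_num) (by norm_num)))
      _ = 1 := by simp only [pow_succ, tsum_mul_right, tsum_geometric_inv_two]; norm_num

lemma engelSum_of_forall_gt_eq_zero (hg : ∀ i > n, g i = 0) :
    engelSum g = engelPartialSum g (n + 1) + cylinderLength g n := by
  have hq : ∀ i, engelDenom g (n + 1 + i) = engelDenom g n := fun i => by
    induction i with
    | zero => rw [add_zero, engelDenom_succ, hg (n + 1) (by omega), add_zero]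
    | succ i ih => rw [← add_assoc, engelDenom_succ, ih, hg _ (by omega), add_zero]
  rw [engelSum_eq_add_tsum g n, ← tsum_engelProd_mul_inv_pow]
  congr 2 with m
  rw [engelProd_add, prod_congr rfl fun i _ => by rw [hq i], prod_const, card_range]

-- The digits of the right and left end points of the interval of numbers whose digits begin
-- with `g 0, …, g n`.
def rightEndDigits (g : ℕ → ℕ) (n : ℕ) : ℕ → ℕ := fun m => if m ≤ n then g m else 0

def leftEndDigits (g : ℕ → ℕ) (n : ℕ) : ℕ → ℕ := Function.update (rightEndDigits g n) n (g n + 1)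

lemma rightEndDigits_eq (g : ℕ → ℕ) {n i : ℕ} (hi : i ≤ n) : rightEndDigits g n i = g i := if_pos hi

lemma rightEndDigits_of_gt (g : ℕ → ℕ) {n i : ℕ} (hi : n < i) : rightEndDigits g n i = 0 :=
  if_neg (by omega)

lemma leftEndDigits_of_lt (g : ℕ → ℕ) {n i : ℕ} (hi : i < n) : leftEndDigits g n i = g i := by
  rw [leftEndDigits, Function.update_of_ne hi.ne, rightEndDigits_eq g hi.le]

lemma leftEndDigits_self (g : ℕ → ℕ) (n : ℕ) : leftEndDigits g n n = g n + 1 :=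
  Function.update_self ..

lemma leftEndDigits_of_gt (g : ℕ → ℕ) {n i : ℕ} (hi : n < i) : leftEndDigits g n i = 0 := by
  rw [leftEndDigits, Function.update_of_ne hi.ne', rightEndDigits_of_gt g hi]

lemma engelSum_rightEndDigits (g : ℕ → ℕ) (n : ℕ) :
    engelSum (rightEndDigits g n) = engelPartialSum g (n + 1) + cylinderLength g n := by
  have h : ∀ i ≤ n, rightEndDigits g n i = g i := fun i hi => rightEndDigits_eq g hi
  rw [engelSum_of_forall_gt_eq_zero fun i hi => rightEndDigits_of_gt g hi,
    engelPartialSum_congr fun i hi => h i (Nat.lt_succ_iff.1 hi), cylinderLength_congr h]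

lemma engelDenom_leftEndDigits (g : ℕ → ℕ) (n : ℕ) :
    engelDenom (leftEndDigits g n) n = engelDenom g n + 1 := by
  simp only [engelDenom, sum_range_succ, leftEndDigits_self]
  rw [sum_congr rfl fun i hi => leftEndDigits_of_lt g (mem_range.1 hi)]
  ring

lemma engelSum_leftEndDigits (g : ℕ → ℕ) (n : ℕ) :
    engelSum (leftEndDigits g n) = engelPartialSum g (n + 1) := by
  have h : ∀ i < n, leftEndDigits g n i = g i := fun i hi => leftEndDigits_of_lt g hi
  have hq : (engelDenom g n : ℝ) ≠ 0 := by linarith [one_lt_engelDenom g n]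
  have hq1 : (engelDenom g n : ℝ) + 1 ≠ 0 := by linarith [one_lt_engelDenom g n]
  rw [engelSum_of_forall_gt_eq_zero fun i hi => leftEndDigits_of_gt g hi, cylinderLength,
    engelPartialSum_succ, engelPartialSum_succ, engelProd_succ, engelProd_succ,
    engelDenom_leftEndDigits, engelPartialSum_congr h, engelProd_congr h]
  push_cast
  rw [add_sub_cancel_right]
  field_simp
  ring

end Engel

noncomputable def digitProd (u : ℕ → ℝ) (g : ℕ → ℕ) (n : ℕ) : ℝ := ∏ i ∈ range n, u (g i)

noncomputable def fTerm (u r : ℕ → ℝ) (g : ℕ → ℕ) (k : ℕ) : ℝ := r (g k) * digitProd u g k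

section FSeries

variable {u r : ℕ → ℝ} {g p : ℕ → ℕ} {n : ℕ}

lemma rpred_succ (r : ℕ → ℝ) (n : ℕ) : rpred r (n + 1) = r n := if_neg n.succ_ne_zero

lemma add_eq_rpred (hr : ∀ n, r n = 1 - ∑ i ∈ range (n + 1), u i) (n : ℕ) :
    r n + u n = rpred r n := by
  cases n with
  | zero => simp [rpred, hr]
  | succ n => rw [rpred_succ, hr, hr, sum_range_succ _ (n + 1)]; ring

lemma rpred_le_one (hr : ∀ n, r n ≤ 1) (n : ℕ) : rpred r n ≤ 1 := by
  unfold rpred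
  split_ifs
  exacts [le_rfl, hr _]

lemma digitProd_succ (u : ℕ → ℝ) (g : ℕ → ℕ) (n : ℕ) :
    digitProd u g (n + 1) = digitProd u g n * u (g n) :=
  prod_range_succ _ _

lemma digitProd_nonneg (hu : ∀ n, 0 ≤ u n) (g : ℕ → ℕ) (n : ℕ) : 0 ≤ digitProd u g n :=
  prod_nonneg fun _ _ => hu _

lemma digitProd_congr (h : ∀ i < n, g i = p i) : digitProd u g n = digitProd u p n :=
  prod_congr rfl fun i hi => by rw [h i (mem_range.1 hi)]

lemma sum_fTerm_congr (h : ∀ i < n, g i = p i) :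
    ∑ k ∈ range n, fTerm u r g k = ∑ k ∈ range n, fTerm u r p k :=
  sum_congr rfl fun k hk => by
    have hk := mem_range.1 hk
    rw [fTerm, fTerm, h k hk, digitProd_congr fun i hi => h i (hi.trans hk)]

-- Telescoping: `fTerm u r g k ≤ digitProd u g k - digitProd u g (k + 1)`.
lemma sum_fTerm_add_digitProd_le (hu : ∀ n, 0 ≤ u n) (hru : ∀ n, r n + u n ≤ 1)
    (g : ℕ → ℕ) (K : ℕ) : ∑ k ∈ range K, fTerm u r g k + digitProd u g K ≤ 1 := by
  induction K with
  | zero => simp [digitProd]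
  | succ K ih =>
    have := mul_le_mul_of_nonneg_left (hru (g K)) (digitProd_nonneg hu g K)
    rw [sum_range_succ, digitProd_succ, fTerm]
    linarith

lemma summable_fTerm (hu : ∀ n, 0 ≤ u n) (hr : ∀ n, 0 ≤ r n) (hru : ∀ n, r n + u n ≤ 1)
    (g : ℕ → ℕ) : Summable (fTerm u r g) :=
  summable_of_sum_range_le (fun k => mul_nonneg (hr _) (digitProd_nonneg hu g k)) fun K =>
    (le_add_of_nonneg_right (digitProd_nonneg hu g K)).trans (sum_fTerm_add_digitProd_le hu hru g K)

lemma fSeries_eq_tsum_s14 (hsum : Summable (fTerm u r g)) : fSeries u r g = ∑' k, fTerm u r g k := by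
  rw [hsum.tsum_eq_zero_add]
  simp [fSeries, fTerm, digitProd]

lemma fSeries_of_forall_gt_eq_zero (hu : ∀ n, 0 ≤ u n) (hr : ∀ n, 0 < r n ∧ r n < 1)
    (hru : ∀ n, r n + u n = rpred r n) (hg : ∀ i > n, g i = 0) :
    fSeries u r g = ∑ k ∈ range n, fTerm u r g k + digitProd u g n * rpred r (g n) := by
  have hsum := summable_fTerm hu (fun n => (hr n).1.le)
    (fun n => (hru n).trans_le (rpred_le_one (fun n => (hr n).2.le) n)) g
  have h0 : r 0 + u 0 = 1 := hru 0
  have hu0 : u 0 < 1 := by linarith [(hr 0).1]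
  have htail : ∀ m, fTerm u r g (m + (n + 1)) = r 0 * digitProd u g (n + 1) * u 0 ^ m := fun m => by
    have hconst : ∀ i, u (g (n + 1 + i)) = u 0 := fun i => by rw [hg (n + 1 + i) (by omega)]
    rw [fTerm, hg (m + (n + 1)) (by omega), digitProd, add_comm m, prod_range_add]
    simp only [hconst, prod_const, card_range, digitProd]
    ring
  rw [fSeries_eq_tsum_s14 hsum, ← hsum.sum_add_tsum_nat_add (n + 1), tsum_congr htail, tsum_mul_left,
    tsum_geometric_of_lt_one (hu 0) hu0, sum_range_succ, fTerm, digitProd_succ, ← hru]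
  field_simp [(by linarith : 1 - u 0 ≠ 0)]
  linear_combination digitProd u g n * u (g n) * h0

lemma fSeries_rightEndDigits_sub_leftEndDigits (hu : ∀ n, 0 ≤ u n)
    (hr : ∀ n, 0 < r n ∧ r n < 1) (hru : ∀ n, r n + u n = rpred r n) (g : ℕ → ℕ) (n : ℕ) :
    fSeries u r (rightEndDigits g n) - fSeries u r (leftEndDigits g n) = digitProd u g (n + 1) := by
  have hR : ∀ i < n, rightEndDigits g n i = g i := fun i hi => rightEndDigits_eq g hi.le
  have hL : ∀ i < n, leftEndDigits g n i = g i := fun i hi => leftEndDigits_of_lt g hi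
  rw [fSeries_of_forall_gt_eq_zero hu hr hru fun i hi => rightEndDigits_of_gt g hi,
    fSeries_of_forall_gt_eq_zero hu hr hru fun i hi => leftEndDigits_of_gt g hi,
    sum_fTerm_congr hR, digitProd_congr hR, sum_fTerm_congr hL, digitProd_congr hL,
    rightEndDigits_eq g le_rfl, leftEndDigits_self, rpred_succ, ← hru, digitProd_succ]
  ring

end FSeries

/-- The ratio of the slopes `digitProd u g (k + 1) / cylinderLength g k` of `f` across the
cylinders of `g` for `k = n + 1` and `k = n`. -/
noncomputable def slopeRatio (u : ℕ → ℝ) (g : ℕ → ℕ) (n : ℕ) : ℝ :=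
  u (g (n + 1)) * (cylinderLength g n / cylinderLength g (n + 1))

def nearCylinder (u : ℕ → ℝ) (ε : ℝ) (p : ℕ → ℕ) (n k : ℕ) : Set (ℕ → ℕ) :=
  {g | (∀ i ≤ n, g i = p i) ∧ ∀ m ∈ Set.Ico n (n + k), |slopeRatio u g m - 1| ≤ ε}

section Measure

variable {u : ℕ → ℝ} {ε : ℝ} {g p : ℕ → ℕ} {n k : ℕ}

lemma cylinderLength_succ_le (hε : ε < 1) (h : |slopeRatio u g n - 1| ≤ ε) :
    cylinderLength g (n + 1) ≤ u (g (n + 1)) * cylinderLength g n / (1 - ε) := by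
  have hpos := cylinderLength_pos g (n + 1)
  rw [le_div_iff₀ (by linarith)]
  calc cylinderLength g (n + 1) * (1 - ε) ≤ cylinderLength g (n + 1) * slopeRatio u g n :=
        mul_le_mul_of_nonneg_left (by linarith [(abs_le.1 h).1]) hpos.le
    _ = u (g (n + 1)) * cylinderLength g n := by rw [slopeRatio]; field_simp

lemma slopeRatio_of_eq_zero (h : g (n + 1) = 0) : slopeRatio u g n = u 0 * engelDenom g n := by
  have hq : engelDenom g (n + 1) = engelDenom g n := by rw [engelDenom_succ, h, add_zero]
  have hq1 := one_lt_engelDenom g n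
  have := engelProd_pos g (n + 1)
  rw [slopeRatio, h, cylinderLength, cylinderLength, engelProd_succ g (n + 1), hq]
  field_simp [(by linarith : (engelDenom g n : ℝ) - 1 ≠ 0)]

lemma volume_image_nearCylinder_le_cylinderLength (p : ℕ → ℕ) (n k : ℕ) :
    volume (engelSum '' nearCylinder u ε p n k) ≤ ENNReal.ofReal (cylinderLength p n) := by
  rw [← add_sub_cancel_left (engelPartialSum p (n + 1)) (cylinderLength p n), ← Real.volume_Ioc]
  refine measure_mono ?_
  rintro _ ⟨g, ⟨hgp, -⟩, rfl⟩
  rw [← engelPartialSum_congr fun i hi => hgp i (Nat.lt_succ_iff.1 hi), ← cylinderLength_congr hgp]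
  exact engelSum_mem_Ioc_s14 g n

lemma ne_zero_of_mem_nearCylinder (hp : 1 + ε < u 0 * engelDenom p n)
    (hg : g ∈ nearCylinder u ε p n (k + 1)) : g (n + 1) ≠ 0 := fun h0 => by
  have h := hg.2 n ⟨le_rfl, by omega⟩
  rw [slopeRatio_of_eq_zero h0, engelDenom_congr hg.1] at h
  linarith [(abs_le.1 h).2]

lemma nearCylinder_succ_inter_subset (hg : g ∈ nearCylinder u ε p n (k + 1)) :
    nearCylinder u ε p n (k + 1) ∩ {g' | g' (n + 1) = g (n + 1)} ⊆
      nearCylinder u ε g (n + 1) k := by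
  rintro g' ⟨⟨hg'p, hg'⟩, hg'g⟩
  refine ⟨fun i hi => ?_, fun m hm => hg' m (Set.Ico_subset_Ico n.le_succ (by omega) hm)⟩
  rcases Nat.lt_or_eq_of_le hi with hi | rfl
  · rw [hg'p i (by omega), hg.1 i (by omega)]
  · exact hg'g

lemma volume_image_nearCylinder_le (hu : ∀ n, 0 ≤ u n)
    (hu_tail : ∀ N, ∑ j ∈ range N, u (j + 1) ≤ 1 - u 0) (hε : ε < 1) (k : ℕ) :
    ∀ (p : ℕ → ℕ) (n : ℕ), 1 + ε < u 0 * engelDenom p n →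
      volume (engelSum '' nearCylinder u ε p n k)
        ≤ ENNReal.ofReal (((1 - u 0) / (1 - ε)) ^ k * cylinderLength p n) := by
  have hρ : 0 ≤ (1 - u 0) / (1 - ε) := div_nonneg (by simpa using hu_tail 0) (by linarith)
  induction k with
  | zero => exact fun p n _ => by simpa using volume_image_nearCylinder_le_cylinderLength p n 0
  | succ k ih =>
    intro p n hp
    set S := nearCylinder u ε p n (k + 1)
    set c := ((1 - u 0) / (1 - ε)) ^ k * cylinderLength p n / (1 - ε) with hc_def
    have hc : 0 ≤ c :=
      div_nonneg (mul_nonneg (pow_nonneg hρ k) (cylinderLength_pos p n).le) (by linarith)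
    have hslice : ∀ j : ℕ, volume (engelSum '' (S ∩ {g | g (n + 1) = j + 1}))
        ≤ ENNReal.ofReal (c * u (j + 1)) := by
      intro j
      rcases (S ∩ {g | g (n + 1) = j + 1}).eq_empty_or_nonempty with hempty | ⟨g, hg, hgj⟩
      · simp [hempty]
      have hsub := nearCylinder_succ_inter_subset hg
      rw [show g (n + 1) = j + 1 from hgj] at hsub
      have hq : 1 + ε < u 0 * engelDenom g (n + 1) := by
        have : (engelDenom p n : ℝ) ≤ engelDenom g (n + 1) := by
          rw [← engelDenom_congr hg.1]; exact_mod_cast engelDenom_mono g n.le_succ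
        nlinarith [hu 0]
      have hlen := cylinderLength_succ_le hε (hg.2 n ⟨le_rfl, by omega⟩)
      rw [hgj, cylinderLength_congr hg.1] at hlen
      refine (measure_mono (image_mono hsub)).trans
        ((ih g (n + 1) hq).trans (ENNReal.ofReal_le_ofReal ?_))
      calc ((1 - u 0) / (1 - ε)) ^ k * cylinderLength g (n + 1)
          ≤ ((1 - u 0) / (1 - ε)) ^ k * (u (j + 1) * cylinderLength p n / (1 - ε)) :=
            mul_le_mul_of_nonneg_left hlen (pow_nonneg hρ k)
        _ = c * u (j + 1) := by ring
    calc volume (engelSum '' S)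
        ≤ ∑' j : ℕ, volume (engelSum '' (S ∩ {g | g (n + 1) = j + 1})) := by
          refine (measure_mono ?_).trans (measure_iUnion_le _)
          rw [← image_iUnion]
          refine image_mono fun g hg => mem_iUnion.2 ?_
          obtain ⟨j, hj⟩ := Nat.exists_eq_add_one.2 (Nat.pos_of_ne_zero
            (ne_zero_of_mem_nearCylinder hp hg))
          exact ⟨j, hg, hj⟩
      _ ≤ ∑' j : ℕ, ENNReal.ofReal (c * u (j + 1)) := ENNReal.tsum_le_tsum hslice
      _ ≤ ENNReal.ofReal (c * (1 - u 0)) := ENNReal.tsum_le_of_sum_range_le fun N => by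
          rw [← ENNReal.ofReal_sum_of_nonneg fun j _ => mul_nonneg hc (hu _), ← mul_sum]
          exact ENNReal.ofReal_le_ofReal (mul_le_mul_of_nonneg_left (hu_tail N) hc)
      _ = ENNReal.ofReal (((1 - u 0) / (1 - ε)) ^ (k + 1) * cylinderLength p n) := by
          rw [hc_def, pow_succ]; ring_nf

lemma volume_image_iInter_nearCylinder (hu : ∀ n, 0 ≤ u n)
    (hu_tail : ∀ N, ∑ j ∈ range N, u (j + 1) ≤ 1 - u 0) (hε : ε < u 0)
    (hp : 1 + ε < u 0 * engelDenom p n) :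
    volume (engelSum '' ⋂ k, nearCylinder u ε p n k) = 0 := by
  have hu0 : u 0 ≤ 1 := by simpa using hu_tail 0
  have hlim : Tendsto (fun k => ENNReal.ofReal (((1 - u 0) / (1 - ε)) ^ k * cylinderLength p n))
      atTop (𝓝 0) := by
    simpa using ENNReal.tendsto_ofReal ((tendsto_pow_atTop_nhds_zero_of_lt_one
      (div_nonneg (by linarith) (by linarith))
      ((div_lt_one (by linarith)).2 (by linarith))).mul_const (cylinderLength p n))
  exact le_antisymm (ge_of_tendsto' hlim fun k =>
    (measure_mono (image_mono (iInter_subset _ k))).trans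
      (volume_image_nearCylinder_le hu hu_tail (by linarith) k p n hp)) zero_le

lemma volume_image_eventually_abs_slopeRatio_sub_one_le (hu : ∀ n, 0 ≤ u n)
    (hu_tail : ∀ N, ∑ j ∈ range N, u (j + 1) ≤ 1 - u 0) (hε : ε < u 0) :
    volume (engelSum '' {g | ∀ᶠ m in atTop,
      1 + ε < u 0 * engelDenom g m ∧ |slopeRatio u g m - 1| ≤ ε}) = 0 := by
  have hcover : {g : ℕ → ℕ | ∀ᶠ m in atTop,
      1 + ε < u 0 * engelDenom g m ∧ |slopeRatio u g m - 1| ≤ ε} ⊆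
      ⋃ (N : ℕ) (σ : Fin (N + 1) → ℕ), {g | (∀ i : Fin (N + 1), g i = σ i) ∧
        ∀ m ≥ N, 1 + ε < u 0 * engelDenom g m ∧ |slopeRatio u g m - 1| ≤ ε} := by
    intro g hg
    obtain ⟨N, hN⟩ := eventually_atTop.1 hg
    exact mem_iUnion₂.2 ⟨N, fun i => g i, fun _ => rfl, hN⟩
  refine measure_mono_null (image_mono hcover) ?_
  simp only [image_iUnion]
  refine measure_iUnion_null fun N => measure_iUnion_null fun σ => ?_
  rcases eq_empty_or_nonempty {g : ℕ → ℕ | (∀ i : Fin (N + 1), g i = σ i) ∧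
      ∀ m ≥ N, 1 + ε < u 0 * engelDenom g m ∧ |slopeRatio u g m - 1| ≤ ε} with hempty | ⟨p, hpσ, hp⟩
  · simp [hempty]
  refine measure_mono_null (Set.image_mono ?_)
    (volume_image_iInter_nearCylinder hu hu_tail hε (hp N le_rfl).1)
  rintro g ⟨hgσ, hg⟩
  exact mem_iInter.2 fun k => ⟨fun i hi => (hgσ ⟨i, by omega⟩).trans (hpσ ⟨i, by omega⟩).symm,
    fun m hm => (hg m hm.1).2⟩

lemma countable_setOf_eventually_eq_zero : {g : ℕ → ℕ | ∀ᶠ n in atTop, g n = 0}.Countable := by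
  refine Set.Countable.mono ?_ (countable_range fun f : ℕ →₀ ℕ => ⇑f)
  intro g (hg : ∀ᶠ n in atTop, g n = 0)
  rw [← Nat.cofinite_eq_atTop, eventually_cofinite] at hg
  exact ⟨Finsupp.ofSupportFinite g hg, rfl⟩

end Measure

lemma HasDerivAt.tendsto_slope_of_mem_Ioc {f : ℝ → ℝ} {d t : ℝ} {a b : ℕ → ℝ}
    (hf : HasDerivAt f d t) (hab : ∀ n, t ∈ Set.Ioc (a n) (b n))
    (hlen : Tendsto (fun n => b n - a n) atTop (𝓝 0)) :
    Tendsto (fun n => (f (b n) - f (a n)) / (b n - a n)) atTop (𝓝 d) := by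
  have hle : ∀ n, |a n - t| ≤ |b n - a n| ∧ |b n - t| ≤ |b n - a n| := fun n => by
    obtain ⟨h1, h2⟩ := hab n
    refine ⟨abs_le_abs ?_ ?_, abs_le_abs ?_ ?_⟩ <;> linarith
  have hO : ∀ c : ℕ → ℝ, (∀ n, |c n - t| ≤ |b n - a n|) →
      Tendsto c atTop (𝓝 t) ∧ (fun n => c n - t) =O[atTop] fun n => b n - a n := fun c hc =>
    ⟨tendsto_sub_nhds_zero_iff.1 (squeeze_zero_norm hc (by simpa using hlen.abs)),
      IsBigO.of_bound' (Eventually.of_forall hc)⟩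
  have he := hasDerivAt_iff_isLittleO.1 hf
  have hea := (he.comp_tendsto (hO a fun n => (hle n).1).1).trans_isBigO (hO a fun n => (hle n).1).2
  have heb := (he.comp_tendsto (hO b fun n => (hle n).2).1).trans_isBigO (hO b fun n => (hle n).2).2
  refine (zero_add d ▸ (heb.sub hea).tendsto_div_nhds_zero.add_const d).congr fun n => ?_
  have : b n - a n ≠ 0 := by linarith [(hab n).1, (hab n).2]
  simp only [Function.comp, smul_eq_mul]
  field_simp
  ring

lemma tendsto_engelDenom_atTop {g : ℕ → ℕ} (hg : ∃ᶠ n in atTop, g n ≠ 0) :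
    Tendsto (engelDenom g) atTop atTop := by
  refine tendsto_atTop_atTop_of_monotone (engelDenom_mono g) fun M => ?_
  induction M with
  | zero => exact ⟨0, Nat.zero_le _⟩
  | succ M ih =>
    obtain ⟨n, hn⟩ := ih
    obtain ⟨m, hm, hgm⟩ := frequently_atTop.1 hg (n + 1)
    obtain ⟨m, rfl⟩ : ∃ k, m = k + 1 := ⟨m - 1, by omega⟩
    refine ⟨m + 1, ?_⟩
    have := engelDenom_mono g (show n ≤ m by omega)
    rw [engelDenom_succ]
    omega

lemma eventually_abs_slopeRatio_sub_one_le {u r : ℕ → ℝ} {f : ℝ → ℝ} {g : ℕ → ℕ} {d ε : ℝ}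
    (hu : ∀ n, 0 ≤ u n) (hr : ∀ n, 0 < r n ∧ r n < 1) (hru : ∀ n, r n + u n = rpred r n)
    (hf : ∀ h, f (engelSum h) = fSeries u r h) (hd : HasDerivAt f d (engelSum g)) (hd0 : d ≠ 0)
    (hg : ∃ᶠ n in atTop, g n ≠ 0) (hu0 : 0 < u 0) (hε : 0 < ε) :
    ∀ᶠ m in atTop, 1 + ε < u 0 * engelDenom g m ∧ |slopeRatio u g m - 1| ≤ ε := by
  set R := fun n => digitProd u g (n + 1) / cylinderLength g n with hR_def
  have hR : Tendsto R atTop (𝓝 d) := by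
    refine (hd.tendsto_slope_of_mem_Ioc (a := fun n => engelSum (leftEndDigits g n))
      (b := fun n => engelSum (rightEndDigits g n)) (fun n => ?_) ?_).congr fun n => ?_
    · rw [engelSum_leftEndDigits, engelSum_rightEndDigits]
      exact engelSum_mem_Ioc_s14 g n
    · simpa [engelSum_leftEndDigits, engelSum_rightEndDigits] using tendsto_cylinderLength g
    · rw [hf, hf, fSeries_rightEndDigits_sub_leftEndDigits hu hr hru, engelSum_leftEndDigits,
        engelSum_rightEndDigits, add_sub_cancel_left]
  have hd_pos : 0 < d := (ge_of_tendsto' hR fun n =>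
    div_nonneg (digitProd_nonneg hu g _) (cylinderLength_pos g n).le).lt_of_ne' hd0
  have hratio : Tendsto (slopeRatio u g) atTop (𝓝 1) := by
    have := (hR.comp (tendsto_add_atTop_nat 1)).div hR hd_pos.ne'
    rw [div_self hd_pos.ne'] at this
    refine this.congr' ((hR.eventually (lt_mem_nhds hd_pos)).mono fun n hn => ?_)
    have hP : digitProd u g (n + 1) ≠ 0 := fun h => by simp [R, h] at hn
    change R (n + 1) / R n = slopeRatio u g n
    simp only [hR_def, digitProd_succ u g (n + 1), slopeRatio]
    field_simp [(cylinderLength_pos g n).ne', (cylinderLength_pos g (n + 1)).ne']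
  have hbig : ∀ᶠ n in atTop, 1 + ε < u 0 * engelDenom g n :=
    ((tendsto_natCast_atTop_atTop.comp (tendsto_engelDenom_atTop hg)).const_mul_atTop
      hu0).eventually_gt_atTop _
  exact hbig.and ((Metric.tendsto_nhds.1 hratio ε hε).mono fun n hn => (Real.dist_eq _ _ ▸ hn).le)

theorem stmt14_general
    (u r : ℕ → ℝ)
    (hr : ∀ n, r n = 1 - ∑ i ∈ Finset.range (n + 1), u i)
    (hr01 : ∀ n, 0 < r n ∧ r n < 1)
    (G : ℝ → ℕ → ℕ)
    (hG : ∀ x ∈ Set.Ioc (0:ℝ) 1, engelSum (G x) = x)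
    (hGuniq : ∀ x ∈ Set.Ioc (0:ℝ) 1, ∀ g : ℕ → ℕ, engelSum g = x → g = G x)
    (f : ℝ → ℝ)
    (hf : ∀ x ∈ Set.Ioc (0:ℝ) 1, f x = fSeries u r (G x))
    (hpos : ∀ n, 0 ≤ u n) :
    (∀ x ∈ Set.Icc (0:ℝ) 1, f x = ∫ t in (0:ℝ)..x, deriv f t) ∨
    (∀ᵐ t ∂(MeasureTheory.volume.restrict (Set.Ioo (0:ℝ) 1)), deriv f t = 0) := by
  right
  have hru := add_eq_rpred hr
  have hu_tail : ∀ N, ∑ j ∈ range N, u (j + 1) ≤ 1 - u 0 := fun N => by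
    linarith [hr N, (hr01 N).1, sum_range_succ' u N]
  have hu0 : 0 < u 0 := by linarith [hr 0, (hr01 0).2, sum_range_one u]
  have hfG : ∀ g, f (engelSum g) = fSeries u r g := fun g => by
    rw [hf _ (engelSum_mem_Ioc_zero_one g), ← hGuniq _ (engelSum_mem_Ioc_zero_one g) g rfl]
  rw [ae_restrict_iff' measurableSet_Ioo, ae_iff]
  refine measure_mono_null (fun t ht => ?_) (measure_union_null
    ((countable_setOf_eventually_eq_zero.image engelSum).measure_zero _)
    (volume_image_eventually_abs_slopeRatio_sub_one_le hpos hu_tail (half_lt_self hu0)))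
  obtain ⟨ht, hdt⟩ := Classical.not_imp.1 ht
  have htG : engelSum (G t) = t := hG t (Ioo_subset_Ioc_self ht)
  have hd : HasDerivAt f (deriv f t) (engelSum (G t)) := by
    rw [htG]
    exact (differentiableAt_of_deriv_ne_zero hdt).hasDerivAt
  by_cases hg : ∃ᶠ n in atTop, G t n ≠ 0
  · exact Or.inr ⟨G t, eventually_abs_slopeRatio_sub_one_le hpos hr01 hru hfG
      hd hdt hg hu0 (half_pos hu0), htG⟩
  · exact Or.inl ⟨G t, not_frequently.1 hg |>.mono fun n => not_not.1, htG⟩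

/-- if all u_n ≥ 0 then f is pure: either f is absolutely
continuous on [0,1] (f(x) = ∫₀ˣ f'(t) dt) or f is singular (f' = 0 a.e. on (0,1)). -/
theorem stmt14
    (u r : ℕ → ℝ)
    (hu_sum : HasSum u 1)
    (hu_abs : ∀ n, |u n| < 1)
    (hr : ∀ n, r n = 1 - ∑ i ∈ Finset.range (n + 1), u i)
    (hr01 : ∀ n, 0 < r n ∧ r n < 1)
    (G : ℝ → ℕ → ℕ)
    (hG : ∀ x ∈ Set.Ioc (0:ℝ) 1, engelSum (G x) = x)
    (hGuniq : ∀ x ∈ Set.Ioc (0:ℝ) 1, ∀ g : ℕ → ℕ, engelSum g = x → g = G x)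
    (f : ℝ → ℝ)
    (hf : ∀ x ∈ Set.Ioc (0:ℝ) 1, f x = fSeries u r (G x))
    (hf0 : f 0 = 0)
    (hpos : ∀ n, 0 ≤ u n) :
    (∀ x ∈ Set.Icc (0:ℝ) 1, f x = ∫ t in (0:ℝ)..x, deriv f t) ∨
    (∀ᵐ t ∂(MeasureTheory.volume.restrict (Set.Ioo (0:ℝ) 1)), deriv f t = 0) :=
  stmt14_general u r hr hr01 G hG hGuniq f hf hpos
end
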